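/- arXiv:1307.0120 — 6 statements merged into one kernel-verified Lean document; each statement's English description precedes it below -/
import Mathlib

section
/- Let (X,f) be a dynamical system with X a compact metric space and f : X → X a continuous surjection. If f has the almost specification property, then f has the asymptotic average shadowing property. -/
open Filter Metric Set MeasureTheory Topology

section Defs

variable {X : Type*} [MetricSpace X]

/-- The Bowen ball of radius `ε` centered at `x` along a finite set of times `Λ`. -/
def bowenBallAlong (f : X → X) (Λ : Finset ℕ) (x : X) (ε : ℝ) : Set X :=
  {y | ∀ j ∈ Λ, dist (f^[j] x) (f^[j] y) < ε}

/-- `g` is a mistake function with threshold `ε₀`. -/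
structure IsMistakeFun (g : ℕ → ℝ → ℕ) (ε₀ : ℝ) : Prop where
  pos : 0 < ε₀
  mono : ∀ n : ℕ, ∀ ε : ℝ, 0 < ε → ε ≤ ε₀ → g n ε ≤ g (n + 1) ε
  small : ∀ ε : ℝ, 0 < ε → ε ≤ ε₀ →
    Tendsto (fun n : ℕ => (g n ε : ℝ) / n) atTop (nhds 0)
  ext : ∀ n : ℕ, ∀ ε : ℝ, ε₀ < ε → g n ε = g n ε₀

/-- The `(g;n,ε)`-Bowen ball `B_n(g;x,ε)`: union of Bowen balls along all
`Λ ⊆ {0,…,n-1}` with `#Λ ≥ n - g(n,ε)`. -/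
def mistakeBowenBall (f : X → X) (g : ℕ → ℝ → ℕ) (n : ℕ) (x : X) (ε : ℝ) : Set X :=
  ⋃ Λ ∈ {Λ : Finset ℕ | Λ ⊆ Finset.range n ∧ n - g n ε ≤ Λ.card},
    bowenBallAlong f Λ x ε

/-- Almost specification property with given mistake function `g` and gap function `kg`. -/
def AlmostSpecWith (f : X → X) (g : ℕ → ℝ → ℕ) (kg : ℝ → ℕ) : Prop :=
  ∀ m : ℕ, 1 ≤ m → ∀ (ε : ℕ → ℝ) (x : ℕ → X) (nseq : ℕ → ℕ),
    (∀ j, 1 ≤ j → j ≤ m → 0 < ε j) →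
    (∀ j, 1 ≤ j → j ≤ m → kg (ε j) ≤ nseq j) →
    ∃ z : X, ∀ j, 1 ≤ j → j ≤ m →
      f^[∑ s ∈ Finset.Ico 1 j, nseq s] z ∈ mistakeBowenBall f g (nseq j) (x j) (ε j)

/-- The almost specification property. -/
def AlmostSpec (f : X → X) : Prop :=
  ∃ (g : ℕ → ℝ → ℕ) (ε₀ : ℝ) (kg : ℝ → ℕ),
    IsMistakeFun g ε₀ ∧ AlmostSpecWith f g kg

/-- `{x_n}` is a `δ`-average-pseudo-orbit of `f`. -/
def AvgPseudoOrbit (f : X → X) (δ : ℝ) (x : ℕ → X) : Prop :=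
  ∃ N : ℕ, 0 < N ∧ ∀ n : ℕ, N ≤ n → ∀ k : ℕ,
    (∑ i ∈ Finset.range n, dist (f (x (i + k))) (x (i + k + 1))) / n < δ

/-- `{x_n}` is `ε`-shadowed in average by `y`. -/
def ShadowedInAvg (f : X → X) (ε : ℝ) (x : ℕ → X) (y : X) : Prop :=
  limsup (fun n : ℕ => (∑ i ∈ Finset.range n, dist (f^[i] y) (x i)) / n) atTop < ε

/-- The average shadowing property. -/
def AvgShadowing (f : X → X) : Prop :=
  ∀ ε : ℝ, 0 < ε → ∃ δ : ℝ, 0 < δ ∧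
    ∀ x : ℕ → X, AvgPseudoOrbit f δ x → ∃ y : X, ShadowedInAvg f ε x y

/-- `{x_n}` is an asymptotic average pseudo-orbit of `f`. -/
def AsympAvgPseudoOrbit (f : X → X) (x : ℕ → X) : Prop :=
  Tendsto (fun n : ℕ => (∑ i ∈ Finset.range n, dist (f (x i)) (x (i + 1))) / n)
    atTop (nhds 0)

/-- `{x_n}` is asymptotically shadowed in average by `y`. -/
def AsympShadowedInAvg (f : X → X) (x : ℕ → X) (y : X) : Prop :=
  Tendsto (fun n : ℕ => (∑ i ∈ Finset.range n, dist (f^[i] y) (x i)) / n)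
    atTop (nhds 0)

/-- The asymptotic average shadowing property. -/
def AsympAvgShadowing (f : X → X) : Prop :=
  ∀ x : ℕ → X, AsympAvgPseudoOrbit f x → ∃ y : X, AsympShadowedInAvg f x y

/-- An infinite `δ`-pseudo-orbit. -/
def PseudoOrbit (f : X → X) (δ : ℝ) (x : ℕ → X) : Prop :=
  ∀ i : ℕ, dist (f (x i)) (x (i + 1)) < δ

/-- There exists a finite `δ`-pseudo-orbit of length `n` from `x` to `y`. -/
def FinChain (f : X → X) (δ : ℝ) (n : ℕ) (x y : X) : Prop :=
  ∃ c : ℕ → X, c 0 = x ∧ c n = y ∧ ∀ i < n, dist (f (c i)) (c (i + 1)) < δ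

/-- Chain transitivity. -/
def ChainTransitive (f : X → X) : Prop :=
  ∀ δ : ℝ, 0 < δ → ∀ x y : X, ∃ n : ℕ, 0 < n ∧ FinChain f δ n x y

/-- Chain mixing. -/
def ChainMixing (f : X → X) : Prop :=
  ∀ δ : ℝ, 0 < δ → ∀ x y : X, ∃ N : ℕ, 0 < N ∧ ∀ n : ℕ, N ≤ n → FinChain f δ n x y

/-- The shadowing property. -/
def Shadowing (f : X → X) : Prop :=
  ∀ ε : ℝ, 0 < ε → ∃ δ : ℝ, 0 < δ ∧
    ∀ x : ℕ → X, PseudoOrbit f δ x → ∃ z : X, ∀ i : ℕ, dist (f^[i] z) (x i) < ε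

/-- The limit shadowing property. -/
def LimitShadowing (f : X → X) : Prop :=
  ∀ x : ℕ → X, Tendsto (fun i : ℕ => dist (f (x i)) (x (i + 1))) atTop (nhds 0) →
    ∃ z : X, Tendsto (fun i : ℕ => dist (f^[i] z) (x i)) atTop (nhds 0)

/-- Topological transitivity. -/
def TopTransitive {Y : Type*} [TopologicalSpace Y] (f : Y → Y) : Prop :=
  ∀ U V : Set Y, IsOpen U → IsOpen V → U.Nonempty → V.Nonempty →
    ∃ n : ℕ, 0 < n ∧ (f^[n] '' U ∩ V).Nonempty

/-- Total transitivity. -/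
def TotallyTransitive {Y : Type*} [TopologicalSpace Y] (f : Y → Y) : Prop :=
  ∀ n : ℕ, 1 ≤ n → TopTransitive f^[n]

/-- Topological weak mixing: `f × f` is transitive. -/
def WeaklyMixing {Y : Type*} [TopologicalSpace Y] (f : Y → Y) : Prop :=
  TopTransitive (Prod.map f f)

/-- Topological mixing. -/
def TopMixing {Y : Type*} [TopologicalSpace Y] (f : Y → Y) : Prop :=
  ∀ U V : Set Y, IsOpen U → IsOpen V → U.Nonempty → V.Nonempty →
    ∃ N : ℕ, 0 < N ∧ ∀ n : ℕ, N ≤ n → (f^[n] '' U ∩ V).Nonempty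

/-- The forward orbit of a point. -/
def fOrbit (f : X → X) (x : X) : Set X := Set.range fun n : ℕ => f^[n] x

/-- `x` is a minimal point of `f`: every point of the orbit closure of `x`
has orbit dense in that orbit closure. -/
def MinimalPoint (f : X → X) (x : X) : Prop :=
  ∀ y ∈ closure (fOrbit f x), closure (fOrbit f x) ⊆ closure (fOrbit f y)

variable [MeasurableSpace X]

/-- `μ` is an `f`-invariant Borel probability measure. -/
def InvariantProb (f : X → X) (μ : Measure X) : Prop :=
  IsProbabilityMeasure μ ∧ ∀ B : Set X, MeasurableSet B → μ (f ⁻¹' B) = μ B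

/-- A set is universally null if it has measure zero for every invariant
probability measure. -/
def UnivNull (f : X → X) (U : Set X) : Prop :=
  ∀ μ : Measure X, InvariantProb f μ → μ U = 0

/-- The measure center: complement of the union of all universally null open sets. -/
def measureCenter (f : X → X) : Set X :=
  (⋃ U ∈ {U : Set X | IsOpen U ∧ UnivNull f U}, U)ᶜ

/-- `μ` has full support. -/
def FullSupport (μ : Measure X) : Prop :=
  ∀ U : Set X, IsOpen U → U.Nonempty → 0 < μ U

end Defs

section Visits

variable {X : Type*} [MetricSpace X]

/-- The set of visiting times `N(x,U)`. -/
def visitTimes (f : X → X) (x : X) (U : Set X) : Set ℕ :=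
  {n : ℕ | 0 < n ∧ f^[n] x ∈ U}

/-- `η(n,U) = max_{x ∈ X} #(N(x,U) ∩ {0,…,n-1})`. -/
noncomputable def eta (f : X → X) (U : Set X) (n : ℕ) : ℕ :=
  sSup {k : ℕ | ∃ x : X, k = (visitTimes f x U ∩ Set.Iio n).ncard}

/-- The visit frequency `ξ(U) = inf_{n>0} η(n,U)/n`. -/
noncomputable def xi (f : X → X) (U : Set X) : ℝ :=
  ⨅ n : ℕ, (eta f U (n + 1) : ℝ) / (n + 1)

/-- `J ⊆ ℕ` has asymptotic density `a`. -/
def HasDensity (J : Set ℕ) (a : ℝ) : Prop :=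
  Tendsto (fun n : ℕ => ((J ∩ Set.Iio n).ncard : ℝ) / n) atTop (nhds a)

/-- Upper asymptotic density of a set of naturals. -/
noncomputable def upperDensity (J : Set ℕ) : ℝ :=
  limsup (fun n : ℕ => ((J ∩ Set.Iio n).ncard : ℝ) / n) atTop

end Visits

/-!
Cut time into consecutive blocks: block `j` has length `len k` and precision `eps k`, where the
scale `k = scale j` grows slowly with `j`. Almost specification, applied to finitely many blocks
and passed to the limit by compactness, gives a point `y` whose orbit, along each block, follows
the orbit of the pseudo-orbit's point at the block start up to `eps k`, except at
`g (len k) (eps k) ≤ eps k * len k` times. If the pseudo-orbit makes no jump of size `≥ gap k`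
inside the block, it stays `eps k`-close to the true orbit of its starting point, so the block
contributes `O(eps k)` on average. Blocks containing a large jump are charged the diameter; since the average jump tends
to zero, below `N` there are at most `eps k * N / len k` large jumps, so these blocks have
vanishing density too. Scale `k` is used only from block `thr k` on, which keeps these
frequency bounds valid and makes consecutive block starts comparable, so averages along block
starts control all averages.
-/

section Averages

theorem sum_range_partialSums_eq_sum_blocks {M : Type*} [AddCommMonoid M] (F : ℕ → M)
    (n : ℕ → ℕ) (J : ℕ) :
    ∑ i ∈ Finset.range (∑ j ∈ Finset.range J, n j), F i =
      ∑ j ∈ Finset.range J, ∑ r ∈ Finset.range (n j), F (∑ j' ∈ Finset.range j, n j' + r) := by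
  induction J with
  | zero => simp
  | succ J ih => rw [Finset.sum_range_succ, Finset.sum_range_add, ih, Finset.sum_range_succ]

theorem tendsto_card_filter_le_div_of_tendsto_avg {a : ℕ → ℝ} (ha : ∀ i, 0 ≤ a i)
    (h : Tendsto (fun N : ℕ => (∑ i ∈ Finset.range N, a i) / N) atTop (𝓝 0))
    {δ : ℝ} (hδ : 0 < δ) :
    Tendsto (fun N : ℕ => (((Finset.range N).filter fun i => δ ≤ a i).card : ℝ) / N)
      atTop (𝓝 0) := by
  have hbound : ∀ N : ℕ, (((Finset.range N).filter fun i => δ ≤ a i).card : ℝ) / N ≤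
      (∑ i ∈ Finset.range N, a i) / N / δ := by
    intro N
    have hcard : (((Finset.range N).filter fun i => δ ≤ a i).card : ℝ) * δ ≤
        ∑ i ∈ Finset.range N, a i :=
      calc _ ≤ ∑ i ∈ (Finset.range N).filter fun i => δ ≤ a i, a i := by
            simpa using Finset.card_nsmul_le_sum _ a δ fun i hi => (Finset.mem_filter.1 hi).2
        _ ≤ _ := Finset.sum_le_sum_of_subset_of_nonneg (Finset.filter_subset _ _)
            fun i _ _ => ha i
    rw [le_div_iff₀ hδ, div_mul_eq_mul_div]
    exact div_le_div_of_nonneg_right hcard N.cast_nonneg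
  refine squeeze_zero (fun N => by positivity) hbound ?_
  simpa using h.div_const δ

theorem tendsto_sum_mul_div_sum_of_tendsto_zero {a w : ℕ → ℝ} (ha : Tendsto a atTop (𝓝 0))
    (hw : 0 ≤ w) (hW : Tendsto (fun J => ∑ j ∈ Finset.range J, w j) atTop atTop) :
    Tendsto (fun J => (∑ j ∈ Finset.range J, a j * w j) / ∑ j ∈ Finset.range J, w j)
      atTop (𝓝 0) := by
  have hlittle : (fun j => a j * w j) =o[atTop] w := by
    simpa using ((Asymptotics.isLittleO_one_iff ℝ).2 ha).mul_isBigO (Asymptotics.isBigO_refl w _)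
  exact (hlittle.sum_range hw hW).tendsto_div_nhds_zero

theorem tendsto_div_of_tendsto_div_comp_strictMono {s : ℕ → ℝ} (hs : Monotone s)
    (hs0 : ∀ N, 0 ≤ s N) {L : ℕ → ℕ} (hL : StrictMono L) {C : ℝ}
    (hLC : ∀ᶠ j in atTop, (L (j + 1) : ℝ) ≤ C * L j)
    (h : Tendsto (fun j => s (L j) / L j) atTop (𝓝 0)) :
    Tendsto (fun N : ℕ => s N / N) atTop (𝓝 0) := by
  classical
  set J : ℕ → ℕ := fun N => Nat.findGreatest (fun j => L j ≤ N) N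
  have hJL : ∀ N, L 0 ≤ N → L (J N) ≤ N := fun N hN =>
    Nat.findGreatest_spec (P := fun j => L j ≤ N) (Nat.zero_le N) hN
  have hLJ : ∀ N, N < L (J N + 1) := by
    intro N
    by_contra! hle
    have := Nat.findGreatest_is_greatest (P := fun j => L j ≤ N) (Nat.lt_succ_self (J N))
    have := hL.id_le (J N + 1)
    grind
  have hJ : Tendsto J atTop atTop := by
    refine tendsto_atTop_atTop.2 fun j => ⟨L j, fun N hN => ?_⟩
    exact Nat.le_findGreatest (le_trans (hL.id_le j) hN) hN
  have hbound : ∀ᶠ N in atTop, s N / N ≤ C * (s (L (J N + 1)) / L (J N + 1)) := by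
    filter_upwards [hJ.eventually hLC, hJ.eventually (eventually_ge_atTop 1),
      eventually_ge_atTop (L 0)] with N hC hJ1 hN
    have hLpos : (0 : ℝ) < L (J N) := by exact_mod_cast (hL.id_le _).trans_lt' hJ1
    have hNpos : (L (J N) : ℝ) ≤ N := by exact_mod_cast hJL N hN
    calc s N / N ≤ s (L (J N + 1)) / L (J N) := by
          gcongr
          · exact hs0 _
          · exact hs (hLJ N).le
      _ ≤ C * (s (L (J N + 1)) / L (J N + 1)) := by
          have hLpos' : (0 : ℝ) < L (J N + 1) :=
            hLpos.trans_le (by exact_mod_cast hL.monotone (Nat.le_succ _))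
          rw [mul_div_assoc', div_le_div_iff₀ hLpos hLpos']
          nlinarith [mul_le_mul_of_nonneg_left hC (hs0 (L (J N + 1)))]
  refine squeeze_zero' (Eventually.of_forall fun N => div_nonneg (hs0 N) N.cast_nonneg)
    hbound ?_
  simpa using (h.comp ((tendsto_add_atTop_nat 1).comp hJ)).const_mul C

theorem exists_antitone_pos_le (u : ℕ → ℝ) (hu : ∀ k, 0 < u k) :
    ∃ v : ℕ → ℝ, Antitone v ∧ (∀ k, 0 < v k) ∧ ∀ k, v k ≤ u k := by
  refine ⟨fun k => (Finset.range (k + 1)).inf' Finset.nonempty_range_add_one u,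
    fun k l hkl => ?_, fun k => ?_, fun k => ?_⟩
  · exact Finset.inf'_mono u (Finset.range_subset_range.2 (by omega)) _
  · exact (Finset.lt_inf'_iff _).2 fun i _ => hu i
  · exact Finset.inf'_le u (Finset.self_mem_range_succ k)

end Averages

section Dynamics

variable {X : Type*}

theorem UniformContinuous.exists_pos_forall_dist_iterate_lt [PseudoMetricSpace X] {f : X → X}
    (hf : UniformContinuous f) (n : ℕ) {ε : ℝ} (hε : 0 < ε) :
    ∃ δ > 0, ∀ c : ℕ → X, (∀ s < n, dist (f (c s)) (c (s + 1)) < δ) →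
      ∀ r ≤ n, dist (f^[r] (c 0)) (c r) < ε := by
  induction n generalizing ε with
  | zero => exact ⟨ε, hε, fun c _ r hr => by simpa [Nat.le_zero.1 hr] using hε⟩
  | succ n ih =>
    obtain ⟨δ₁, hδ₁, hfδ₁⟩ := Metric.uniformContinuous_iff.1 hf (ε / 2) (half_pos hε)
    obtain ⟨δ₂, hδ₂, hc⟩ := ih (lt_min hδ₁ (half_pos hε))
    refine ⟨min δ₂ (ε / 2), lt_min hδ₂ (half_pos hε), fun c hjump r hr => ?_⟩
    have hjump' : ∀ s < n, dist (f (c s)) (c (s + 1)) < δ₂ := fun s hs =>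
      (hjump s (by omega)).trans_le (min_le_left _ _)
    rcases Nat.lt_or_ge r (n + 1) with hr | hr
    · exact (hc c hjump' r (by omega)).trans_le ((min_le_right _ _).trans (half_le_self hε.le))
    obtain rfl : r = n + 1 := by omega
    have hfar : dist (f (f^[n] (c 0))) (f (c n)) < ε / 2 :=
      hfδ₁ ((hc c hjump' n le_rfl).trans_le (min_le_left _ _))
    have hnear : dist (f (c n)) (c (n + 1)) < ε / 2 :=
      (hjump n (by omega)).trans_le (min_le_right _ _)
    calc dist (f^[n + 1] (c 0)) (c (n + 1))
        ≤ dist (f (f^[n] (c 0))) (f (c n)) + dist (f (c n)) (c (n + 1)) := by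
          rw [Function.iterate_succ_apply']
          exact dist_triangle _ _ _
      _ < ε := by linarith

variable [MetricSpace X]

-- Non-strict, so that membership passes to limits of orbits.
def closedBowenBallAlong (f : X → X) (Λ : Finset ℕ) (x : X) (ε : ℝ) : Set X :=
  {y | ∀ j ∈ Λ, dist (f^[j] x) (f^[j] y) ≤ ε}

def closedMistakeBowenBall (f : X → X) (g : ℕ → ℝ → ℕ) (n : ℕ) (x : X) (ε : ℝ) : Set X :=
  ⋃ Λ ∈ {Λ : Finset ℕ | Λ ⊆ Finset.range n ∧ n - g n ε ≤ Λ.card},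
    closedBowenBallAlong f Λ x ε

theorem mistakeBowenBall_subset_closedMistakeBowenBall (f : X → X) (g : ℕ → ℝ → ℕ) (n : ℕ)
    (x : X) (ε : ℝ) : mistakeBowenBall f g n x ε ⊆ closedMistakeBowenBall f g n x ε :=
  biUnion_mono subset_rfl fun _ _ _ hy j hj => (hy j hj).le

theorem isClosed_closedMistakeBowenBall {f : X → X} (hf : Continuous f) (g : ℕ → ℝ → ℕ)
    (n : ℕ) (x : X) (ε : ℝ) : IsClosed (closedMistakeBowenBall f g n x ε) := by
  refine Set.Finite.isClosed_biUnion ?_ fun Λ _ => ?_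
  · exact (Finset.range n).powerset.finite_toSet.subset fun Λ hΛ =>
      Finset.mem_coe.2 (Finset.mem_powerset.2 hΛ.1)
  · simp only [closedBowenBallAlong, ofPred_forall]
    exact isClosed_biInter fun j _ =>
      isClosed_le (continuous_const.dist (hf.iterate j)) continuous_const

theorem AlmostSpecWith.exists_forall_lt_iterate_mem {f : X → X} {g : ℕ → ℝ → ℕ}
    {kg : ℝ → ℕ} (hspec : AlmostSpecWith f g kg) {ε : ℕ → ℝ} {x : ℕ → X} {n : ℕ → ℕ}
    (hε : ∀ j, 0 < ε j) (hn : ∀ j, kg (ε j) ≤ n j) (m : ℕ) :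
    ∃ z : X, ∀ j < m,
      f^[∑ i ∈ Finset.range j, n i] z ∈ mistakeBowenBall f g (n j) (x j) (ε j) := by
  obtain ⟨z, hz⟩ := hspec (m + 1) (by omega) (fun j => ε (j - 1)) (fun j => x (j - 1))
    (fun j => n (j - 1)) (fun j _ _ => hε _) (fun j _ _ => hn _)
  refine ⟨z, fun j hj => ?_⟩
  simpa [Finset.sum_Ico_eq_sum_range] using hz (j + 1) (by omega) (by omega)

theorem AlmostSpecWith.exists_forall_iterate_mem_closedMistakeBowenBall [CompactSpace X]
    {f : X → X} {g : ℕ → ℝ → ℕ} {kg : ℝ → ℕ} (hspec : AlmostSpecWith f g kg)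
    (hf : Continuous f) {ε : ℕ → ℝ} {x : ℕ → X} {n : ℕ → ℕ}
    (hε : ∀ j, 0 < ε j) (hn : ∀ j, kg (ε j) ≤ n j) :
    ∃ y : X, ∀ j,
      f^[∑ i ∈ Finset.range j, n i] y ∈ closedMistakeBowenBall f g (n j) (x j) (ε j) := by
  set t : ℕ → Set X := fun m => ⋂ j ∈ Iio m,
    f^[∑ i ∈ Finset.range j, n i] ⁻¹' closedMistakeBowenBall f g (n j) (x j) (ε j)
  have ht_closed : ∀ m, IsClosed (t m) := fun m => isClosed_biInter fun j _ =>
    (isClosed_closedMistakeBowenBall hf g _ _ _).preimage (hf.iterate _)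
  have ht_nonempty : ∀ m, (t m).Nonempty := fun m => by
    obtain ⟨z, hz⟩ := hspec.exists_forall_lt_iterate_mem hε hn (x := x) m
    exact ⟨z, mem_iInter₂.2 fun j hj =>
      mistakeBowenBall_subset_closedMistakeBowenBall f g _ _ _ (hz j hj)⟩
  obtain ⟨y, hy⟩ := IsCompact.nonempty_iInter_of_sequence_nonempty_isCompact_isClosed t
    (fun m => biInter_subset_biInter_left (Iio_subset_Iio (Nat.le_succ m))) ht_nonempty
    (ht_closed 0).isCompact ht_closed
  exact ⟨y, fun j => mem_iInter₂.1 (mem_iInter.1 hy (j + 1)) j (Nat.lt_succ_self j)⟩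

theorem sum_range_dist_iterate_le_of_mem_closedMistakeBowenBall {f : X → X}
    {g : ℕ → ℝ → ℕ} {n : ℕ} {ε D : ℝ} {c : ℕ → X} {y : X}
    (hy : y ∈ closedMistakeBowenBall f g n (c 0) ε) (hε : 0 ≤ ε)
    (hc : ∀ r < n, dist (f^[r] (c 0)) (c r) ≤ ε) (hD : ∀ a b : X, dist a b ≤ D) :
    ∑ r ∈ Finset.range n, dist (f^[r] y) (c r) ≤ 2 * ε * n + D * g n ε := by
  obtain ⟨Λ, ⟨hΛn, hΛcard⟩, hΛ⟩ := mem_iUnion₂.1 hy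
  have hgood : ∀ r ∈ Λ, dist (f^[r] y) (c r) ≤ 2 * ε := fun r hr =>
    calc dist (f^[r] y) (c r) ≤ dist (f^[r] (c 0)) (f^[r] y) + dist (f^[r] (c 0)) (c r) :=
          dist_triangle_left _ _ _
      _ ≤ ε + ε := add_le_add (hΛ r hr) (hc r (Finset.mem_range.1 (hΛn hr)))
      _ = 2 * ε := by ring
  have hmistakes : (Finset.range n \ Λ).card ≤ g n ε := by
    rw [Finset.card_sdiff_of_subset hΛn, Finset.card_range]
    omega
  have hΛle : (Λ.card : ℝ) ≤ n := by
    exact_mod_cast (Finset.card_le_card hΛn).trans_eq (Finset.card_range n)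
  have hD0 : 0 ≤ D := (dist_self y).symm.trans_le (hD y y)
  calc ∑ r ∈ Finset.range n, dist (f^[r] y) (c r)
      = ∑ r ∈ Finset.range n \ Λ, dist (f^[r] y) (c r) + ∑ r ∈ Λ, dist (f^[r] y) (c r) :=
        (Finset.sum_sdiff hΛn).symm
    _ ≤ (Finset.range n \ Λ).card * D + Λ.card * (2 * ε) := by
        simp only [← nsmul_eq_mul]
        exact add_le_add (Finset.sum_le_card_nsmul _ _ _ fun r _ => hD _ _)
          (Finset.sum_le_card_nsmul _ _ _ hgood)
    _ ≤ g n ε * D + n * (2 * ε) := by gcongr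
    _ = 2 * ε * n + D * g n ε := by ring

end Dynamics

section Schedule

variable {X : Type*} [MetricSpace X]

noncomputable def largeJumps (f : X → X) (x : ℕ → X) (δ : ℝ) (N : ℕ) : Finset ℕ :=
  (Finset.range N).filter fun i => δ ≤ dist (f (x i)) (x (i + 1))

theorem card_largeJumps_partialSums (f : X → X) (x : ℕ → X) (δ : ℝ) (n : ℕ → ℕ) (J : ℕ) :
    (largeJumps f x δ (∑ j ∈ Finset.range J, n j)).card =
      ∑ j ∈ Finset.range J,
        (largeJumps f (fun r => x (∑ j' ∈ Finset.range j, n j' + r)) δ (n j)).card := by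
  simp only [largeJumps, Finset.card_filter, sum_range_partialSums_eq_sum_blocks, add_assoc]

theorem IsMistakeFun.eventually_le_mul {g : ℕ → ℝ → ℕ} {ε₀ : ℝ} (hg : IsMistakeFun g ε₀)
    {ε : ℝ} (hε : 0 < ε) (hεε₀ : ε ≤ ε₀) : ∀ᶠ n : ℕ in atTop, (g n ε : ℝ) ≤ ε * n := by
  filter_upwards [(hg.small ε hε hεε₀).eventually (gt_mem_nhds hε), eventually_gt_atTop 0]
    with n hn hn0
  exact ((div_lt_iff₀ (by exact_mod_cast hn0)).1 hn).le

theorem AsympAvgPseudoOrbit.eventually_mul_card_largeJumps_le {f : X → X} {x : ℕ → X}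
    (hx : AsympAvgPseudoOrbit f x) {δ : ℝ} (hδ : 0 < δ) {ε : ℝ} (hε : 0 < ε) {n : ℕ}
    (hn : 0 < n) : ∀ᶠ N : ℕ in atTop, (n : ℝ) * (largeJumps f x δ N).card ≤ ε * N := by
  have hn' : (0 : ℝ) < n := by exact_mod_cast hn
  filter_upwards [(tendsto_card_filter_le_div_of_tendsto_avg (fun _ => dist_nonneg) hx hδ
    ).eventually (gt_mem_nhds (div_pos hε hn')), eventually_gt_atTop 0] with N hN hN0
  rw [div_lt_div_iff₀ (by exact_mod_cast hN0) hn'] at hN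
  rw [largeJumps]
  linarith

structure AvgShadowingSchedule (f : X → X) (g : ℕ → ℝ → ℕ) (kg : ℝ → ℕ) (x : ℕ → X) where
  eps : ℕ → ℝ
  len : ℕ → ℕ
  gap : ℕ → ℝ
  thr : ℕ → ℕ
  eps_pos : ∀ k, 0 < eps k
  tendsto_eps : Tendsto eps atTop (𝓝 0)
  len_pos : ∀ k, 0 < len k
  len_mono : Monotone len
  kg_le_len : ∀ k, kg (eps k) ≤ len k
  mistakes_le : ∀ k, (g (len k) (eps k) : ℝ) ≤ eps k * len k
  gap_anti : Antitone gap
  shadow : ∀ k, ∀ c : ℕ → X, (∀ s < len k, dist (f (c s)) (c (s + 1)) < gap k) →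
    ∀ r ≤ len k, dist (f^[r] (c 0)) (c r) < eps k
  len_le_thr : ∀ k, len k ≤ thr k
  card_largeJumps_le : ∀ k, ∀ N ≥ thr k, (len k : ℝ) * (largeJumps f x (gap k) N).card ≤ eps k * N

theorem exists_avgShadowingSchedule {f : X → X} {g : ℕ → ℝ → ℕ} {ε₀ : ℝ}
    (hg : IsMistakeFun g ε₀) (kg : ℝ → ℕ) (hf : UniformContinuous f) {x : ℕ → X}
    (hx : AsympAvgPseudoOrbit f x) : Nonempty (AvgShadowingSchedule f g kg x) := by
  set eps : ℕ → ℝ := fun k => ε₀ / (k + 1)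
  have heps_pos : ∀ k, 0 < eps k := fun k => div_pos hg.pos (by positivity)
  have heps_le : ∀ k, eps k ≤ ε₀ := fun k =>
    div_le_self hg.pos.le (by linarith [(k.cast_nonneg : (0 : ℝ) ≤ k)])
  have htendsto : Tendsto eps atTop (𝓝 0) := by
    simpa only [mul_one_div, mul_zero] using
      tendsto_one_div_add_atTop_nhds_zero_nat.const_mul ε₀
  obtain ⟨len, hlen_mono, hlen⟩ := extraction_forall_of_eventually fun k =>
    (eventually_gt_atTop 0).and
      ((eventually_ge_atTop (kg (eps k))).and (hg.eventually_le_mul (heps_pos k) (heps_le k)))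
  choose gap₀ hgap₀ hshadow using fun k =>
    hf.exists_pos_forall_dist_iterate_lt (len k) (heps_pos k)
  obtain ⟨gap, hgap_anti, hgap_pos, hgap_le⟩ := exists_antitone_pos_le gap₀ hgap₀
  choose thr hthr using fun k => eventually_atTop.1 ((eventually_ge_atTop (len k)).and
    (hx.eventually_mul_card_largeJumps_le (hgap_pos k) (heps_pos k) (hlen k).1))
  exact ⟨{
    eps, len, gap, thr
    eps_pos := heps_pos
    tendsto_eps := htendsto
    len_pos := fun k => (hlen k).1
    len_mono := hlen_mono.monotone
    kg_le_len := fun k => (hlen k).2.1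
    mistakes_le := fun k => (hlen k).2.2
    gap_anti := hgap_anti
    shadow := fun k c hc => hshadow k c fun s hs => (hc s hs).trans_le (hgap_le k)
    len_le_thr := fun k => (hthr k _ le_rfl).1
    card_largeJumps_le := fun k N hN => (hthr k N hN).2 }⟩

end Schedule

namespace AvgShadowingSchedule

variable {X : Type*} [MetricSpace X] {f : X → X} {g : ℕ → ℝ → ℕ} {kg : ℝ → ℕ} {x : ℕ → X}
  (S : AvgShadowingSchedule f g kg x)

-- `0` when no `k ≤ j` has `S.thr k ≤ j`, hence the hypotheses `S.thr 0 ≤ j` below.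
def scale (j : ℕ) : ℕ := Nat.findGreatest (fun k => S.thr k ≤ j) j

def blockLen (j : ℕ) : ℕ := S.len (S.scale j)

def blockStart (J : ℕ) : ℕ := ∑ j ∈ Finset.range J, S.blockLen j

theorem scale_mono : Monotone S.scale := fun _ _ hij =>
  Nat.findGreatest_mono (fun _ hk => hk.trans hij) hij

theorem tendsto_scale : Tendsto S.scale atTop atTop :=
  tendsto_atTop_atTop.2 fun k => ⟨max k (S.thr k), fun _ hj =>
    Nat.le_findGreatest (le_of_max_le_left hj) (le_of_max_le_right hj)⟩

theorem thr_scale_le {j : ℕ} (hj : S.thr 0 ≤ j) : S.thr (S.scale j) ≤ j :=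
  Nat.findGreatest_spec (P := fun k => S.thr k ≤ j) (Nat.zero_le j) hj

theorem blockStart_succ (j : ℕ) : S.blockStart (j + 1) = S.blockStart j + S.blockLen j :=
  Finset.sum_range_succ _ _

theorem blockStart_strictMono : StrictMono S.blockStart :=
  strictMono_nat_of_lt_succ fun j => by
    rw [blockStart_succ]
    exact Nat.lt_add_of_pos_right (S.len_pos _)

theorem blockStart_succ_le_two_mul {j : ℕ} (hj : S.thr 0 ≤ j) :
    S.blockStart (j + 1) ≤ 2 * S.blockStart j := by
  have := (S.len_le_thr _).trans ((S.thr_scale_le hj).trans (S.blockStart_strictMono.id_le j))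
  rw [blockStart_succ, blockLen]
  omega

theorem sum_block_le {D : ℝ} (hD : ∀ a b : X, dist a b ≤ D) {y : X} {l k : ℕ}
    (hy : f^[l] y ∈ closedMistakeBowenBall f g (S.len k) (x l) (S.eps k)) :
    ∑ r ∈ Finset.range (S.len k), dist (f^[l + r] y) (x (l + r)) ≤
      (2 + D) * S.eps k * S.len k +
        D * S.len k * (largeJumps f (fun r => x (l + r)) (S.gap k) (S.len k)).card := by
  have hD0 : 0 ≤ D := (dist_self y).symm.trans_le (hD y y)
  have hiter : ∀ r, f^[l + r] y = f^[r] (f^[l] y) := fun r => by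
    rw [add_comm, Function.iterate_add_apply]
  simp only [hiter]
  by_cases hjumps : largeJumps f (fun r => x (l + r)) (S.gap k) (S.len k) = ∅
  · have hshadow : ∀ r < S.len k, dist (f^[r] (x l)) (x (l + r)) ≤ S.eps k := by
      refine fun r hr => (S.shadow k (fun r => x (l + r)) (fun s hs => ?_) r hr.le).le
      by_contra! hjump
      exact Finset.eq_empty_iff_forall_notMem.1 hjumps s
        (Finset.mem_filter.2 ⟨Finset.mem_range.2 hs, hjump⟩)
    have := sum_range_dist_iterate_le_of_mem_closedMistakeBowenBall (c := fun r => x (l + r))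
      hy (S.eps_pos k).le hshadow hD
    rw [hjumps, Finset.card_empty, Nat.cast_zero, mul_zero, add_zero]
    nlinarith [S.mistakes_le k]
  · have hcard : (1 : ℝ) ≤ (largeJumps f (fun r => x (l + r)) (S.gap k) (S.len k)).card := by
      exact_mod_cast Finset.card_pos.2 (Finset.nonempty_iff_ne_empty.2 hjumps)
    have hsum : ∑ r ∈ Finset.range (S.len k), dist (f^[r] (f^[l] y)) (x (l + r)) ≤
        S.len k * D :=
      (Finset.sum_le_card_nsmul _ _ _ fun r _ => hD _ _).trans_eq (by simp)
    have hbad : D * S.len k ≤ D * S.len k * (largeJumps f (fun r => x (l + r)) (S.gap k)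
        (S.len k)).card := le_mul_of_one_le_right (by positivity) hcard
    have hgood : 0 ≤ (2 + D) * S.eps k * S.len k := by have := (S.eps_pos k).le; positivity
    linarith

theorem sum_blockLen_mul_card_largeJumps_le {J : ℕ} (hJ : S.thr 0 ≤ J) :
    ∑ j ∈ Finset.range J, (S.blockLen j : ℝ) *
        (largeJumps f (fun r => x (S.blockStart j + r)) (S.gap (S.scale j)) (S.blockLen j)).card
      ≤ S.eps (S.scale J) * S.blockStart J := by
  set K := S.scale J
  calc _ ≤ ∑ j ∈ Finset.range J, (S.len K : ℝ) *
        (largeJumps f (fun r => x (S.blockStart j + r)) (S.gap K) (S.blockLen j)).card := by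
        refine Finset.sum_le_sum fun j hj => ?_
        have hjK : S.scale j ≤ K := S.scale_mono (Finset.mem_range.1 hj).le
        gcongr
        · exact S.len_mono hjK
        · exact Finset.monotone_filter_right _ fun i _ hi => (S.gap_anti hjK).trans hi
    _ = S.len K * (largeJumps f x (S.gap K) (S.blockStart J)).card := by
        rw [← Finset.mul_sum, blockStart, card_largeJumps_partialSums, Nat.cast_sum]
        rfl
    _ ≤ S.eps K * S.blockStart J :=
        S.card_largeJumps_le K _ ((S.thr_scale_le hJ).trans (S.blockStart_strictMono.id_le J))

theorem sum_range_blockStart_le {D : ℝ} (hD : ∀ a b : X, dist a b ≤ D) {y : X}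
    (hy : ∀ j, f^[S.blockStart j] y ∈
      closedMistakeBowenBall f g (S.blockLen j) (x (S.blockStart j)) (S.eps (S.scale j)))
    {J : ℕ} (hJ : S.thr 0 ≤ J) :
    ∑ i ∈ Finset.range (S.blockStart J), dist (f^[i] y) (x i) ≤
      (2 + D) * ∑ j ∈ Finset.range J, S.eps (S.scale j) * S.blockLen j +
        D * (S.eps (S.scale J) * S.blockStart J) := by
  have hD0 : 0 ≤ D := (dist_self y).symm.trans_le (hD y y)
  calc ∑ i ∈ Finset.range (S.blockStart J), dist (f^[i] y) (x i)
      = ∑ j ∈ Finset.range J, ∑ r ∈ Finset.range (S.blockLen j),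
          dist (f^[S.blockStart j + r] y) (x (S.blockStart j + r)) :=
        sum_range_partialSums_eq_sum_blocks _ _ _
    _ ≤ ∑ j ∈ Finset.range J, ((2 + D) * S.eps (S.scale j) * S.blockLen j +
          D * S.blockLen j * (largeJumps f (fun r => x (S.blockStart j + r))
            (S.gap (S.scale j)) (S.blockLen j)).card) :=
        Finset.sum_le_sum fun j _ => S.sum_block_le hD (hy j)
    _ ≤ _ := by
        simp only [Finset.sum_add_distrib, mul_assoc, ← Finset.mul_sum]
        gcongr
        exact S.sum_blockLen_mul_card_largeJumps_le hJ

theorem tendsto_sum_eps_mul_blockLen_div_blockStart :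
    Tendsto (fun J => (∑ j ∈ Finset.range J, S.eps (S.scale j) * S.blockLen j) /
      S.blockStart J) atTop (𝓝 0) := by
  simpa only [Function.comp_def, blockStart, Nat.cast_sum] using
    tendsto_sum_mul_div_sum_of_tendsto_zero (S.tendsto_eps.comp S.tendsto_scale)
      (fun j => (S.blockLen j).cast_nonneg)
      (by simpa only [Function.comp_def, blockStart, Nat.cast_sum] using
        tendsto_natCast_atTop_atTop.comp S.blockStart_strictMono.tendsto_atTop)

theorem asympShadowedInAvg [BoundedSpace X] {y : X}
    (hy : ∀ j, f^[S.blockStart j] y ∈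
      closedMistakeBowenBall f g (S.blockLen j) (x (S.blockStart j)) (S.eps (S.scale j))) :
    AsympShadowedInAvg f x y := by
  set D := diam (univ : Set X)
  have hD : ∀ a b : X, dist a b ≤ D := fun a b =>
    dist_le_diam_of_mem (Bornology.isBounded_univ.2 ‹_›) (mem_univ a) (mem_univ b)
  set s : ℕ → ℝ := fun N => ∑ i ∈ Finset.range N, dist (f^[i] y) (x i)
  have hs0 : ∀ N, 0 ≤ s N := fun N => Finset.sum_nonneg fun i _ => dist_nonneg
  have hs : Monotone s := fun M N hMN => Finset.sum_le_sum_of_subset_of_nonneg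
    (Finset.range_subset_range.2 hMN) fun i _ _ => dist_nonneg
  have hblocks : Tendsto (fun J => s (S.blockStart J) / S.blockStart J) atTop (𝓝 0) := by
    have hbound : Tendsto (fun J => (2 + D) * ((∑ j ∈ Finset.range J,
        S.eps (S.scale j) * S.blockLen j) / S.blockStart J) + D * S.eps (S.scale J))
        atTop (𝓝 0) := by
      simpa using
        (S.tendsto_sum_eps_mul_blockLen_div_blockStart.const_mul (2 + D)).add ((S.tendsto_eps.comp S.tendsto_scale).const_mul D)
    refine squeeze_zero' (Eventually.of_forall fun J => div_nonneg (hs0 _) (Nat.cast_nonneg _))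
      ?_ hbound
    filter_upwards [eventually_ge_atTop (S.thr 0), eventually_gt_atTop 0] with J hJ hJ0
    have hL : (0 : ℝ) < S.blockStart J := by
      exact_mod_cast hJ0.trans_le (S.blockStart_strictMono.id_le J)
    rw [div_le_iff₀ hL, add_mul, mul_assoc, div_mul_cancel₀ _ hL.ne']
    simpa [mul_assoc] using S.sum_range_blockStart_le hD hy hJ
  refine tendsto_div_of_tendsto_div_comp_strictMono hs hs0 S.blockStart_strictMono (C := 2) ?_
    hblocks
  filter_upwards [eventually_ge_atTop (S.thr 0)] with j hj
  exact_mod_cast S.blockStart_succ_le_two_mul hj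

end AvgShadowingSchedule

theorem almostSpec_implies_asympAvgShadowing_general
    {X : Type*} [MetricSpace X] [CompactSpace X]
    (f : X → X) (hf : Continuous f)
    (h : AlmostSpec f) : AsympAvgShadowing f := by
  obtain ⟨g, ε₀, kg, hg, hspec⟩ := h
  intro x hx
  obtain ⟨S⟩ := exists_avgShadowingSchedule hg kg
    (CompactSpace.uniformContinuous_of_continuous hf) hx
  obtain ⟨y, hy⟩ := hspec.exists_forall_iterate_mem_closedMistakeBowenBall hf
    (x := fun j => x (S.blockStart j)) (fun j => S.eps_pos (S.scale j))
    (fun j => S.kg_le_len (S.scale j))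
  exact ⟨y, S.asympShadowedInAvg hy⟩

/-- For a continuous surjection on a compact metric space, almost
specification implies the asymptotic average shadowing property. -/
theorem almostSpec_implies_asympAvgShadowing
    {X : Type*} [MetricSpace X] [CompactSpace X]
    (f : X → X) (hf : Continuous f) (hsurj : Function.Surjective f)
    (h : AlmostSpec f) : AsympAvgShadowing f :=
  almostSpec_implies_asympAvgShadowing_general f hf h
end

section
/- Let (X,f) be a dynamical system with X a compact metric space and f : X → X a continuous surjection. If f has the asymptotic average shadowing property, then f has the average shadowing property. -/
open Filter Metric Set MeasureTheory Topology

/-- STATEMENT 1 aux -/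
lemma avg_unif_fail {X : Type*} [MetricSpace X] [CompactSpace X] (f : X → X)
    (hf : Continuous f) (ξ : ℕ → X) (ε : ℝ) (hε : 0 < ε)
    (hns : ∀ p : X, ε ≤ limsup
      (fun n : ℕ => (∑ i ∈ Finset.range n, dist (f^[i] p) (ξ i)) / n) atTop)
    (M : ℕ) :
    ∃ L : ℕ, M ≤ L ∧ ∀ p : X, ∃ n : ℕ, M ≤ n ∧ n ≤ L ∧
      ε / 2 * n ≤ ∑ i ∈ Finset.range n, dist (f^[i] p) (ξ i) := by
  set M' := max M 1 with hM'
  set V : ℕ → Set X := fun j =>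
    {p | ε / 2 * (M' + j : ℕ) < ∑ i ∈ Finset.range (M' + j), dist (f^[i] p) (ξ i)} with hV
  have hVopen : ∀ j, IsOpen (V j) := by
    intro j
    have hcont : Continuous fun p : X => ∑ i ∈ Finset.range (M' + j), dist (f^[i] p) (ξ i) :=
      continuous_finset_sum _ (fun i _ => (hf.iterate i).dist continuous_const)
    exact isOpen_lt continuous_const hcont
  have hcover : (Set.univ : Set X) ⊆ ⋃ j, V j := by
    intro p _
    have hfreq : ∃ᶠ n in atTop,
        ε / 2 < (∑ i ∈ Finset.range n, dist (f^[i] p) (ξ i)) / n :=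
      Filter.frequently_lt_of_lt_limsup
        (Filter.isCoboundedUnder_le_of_le atTop (fun n => by positivity))
        (lt_of_lt_of_le (by linarith) (hns p))
    obtain ⟨n, hn1, hn2⟩ := (Filter.frequently_atTop.mp hfreq) M'
    have hn0 : (0 : ℝ) < n := by
      have : 1 ≤ n := le_trans (le_max_right M 1) hn1
      exact_mod_cast this
    refine Set.mem_iUnion.mpr ⟨n - M', ?_⟩
    have he : M' + (n - M') = n := by omega
    simp only [hV, Set.mem_setOf_eq, he]
    rw [lt_div_iff₀ hn0] at hn2
    linarith
  obtain ⟨t, ht⟩ := isCompact_univ.elim_finite_subcover V hVopen hcover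
  refine ⟨M' + t.sup id, le_trans (le_max_left M 1) (Nat.le_add_right _ _), fun p => ?_⟩
  obtain ⟨j, hjt, hpj⟩ := Set.mem_iUnion₂.mp (ht (Set.mem_univ p))
  refine ⟨M' + j, le_trans (le_max_left M 1) (Nat.le_add_right _ _),
    Nat.add_le_add_left (Finset.le_sup (f := id) hjt) _, le_of_lt hpj⟩

/-- For a continuous surjection on a compact metric space, the
asymptotic average shadowing property implies the average shadowing property. -/
theorem asympAvgShadowing_implies_avgShadowing
    {X : Type*} [MetricSpace X] [CompactSpace X]
    (f : X → X) (hf : Continuous f) (hsurj : Function.Surjective f)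
    (h : AsympAvgShadowing f) : AvgShadowing f := by
  by_contra hc
  rw [AvgShadowing] at hc
  push_neg at hc
  obtain ⟨ε, hε, hc⟩ := hc
  -- step 1: choose the bad pseudo-orbits
  have hdata : ∀ k : ℕ, ∃ x : ℕ → X, (∃ N : ℕ, 0 < N ∧ ∀ n, N ≤ n →
      (∑ i ∈ Finset.range n, dist (f (x i)) (x (i + 1))) ≤ (n : ℝ) / 2 ^ (k + 1)) ∧
      ∀ p : X, ε ≤ limsup
        (fun n : ℕ => (∑ i ∈ Finset.range n, dist (f^[i] p) (x i)) / n) atTop := by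
    intro k
    obtain ⟨x, ⟨N, hN, hx⟩, hs⟩ := hc ((1 : ℝ) / 2 ^ (k + 1)) (by positivity)
    refine ⟨x, ⟨N, hN, fun n hn => ?_⟩, fun p => not_lt.mp (hs p)⟩
    have h0 := hx n hn 0
    simp only [Nat.add_zero] at h0
    have hn0 : (0 : ℝ) < n := by exact_mod_cast lt_of_lt_of_le hN hn
    rw [div_lt_iff₀ hn0] at h0
    calc (∑ i ∈ Finset.range n, dist (f (x i)) (x (i + 1)))
        ≤ 1 / 2 ^ (k + 1) * n := le_of_lt h0
      _ = (n : ℝ) / 2 ^ (k + 1) := by ring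
  choose ξ hNex hns using hdata
  choose N hNdat using hNex
  have hNpos : ∀ k, 0 < N k := fun k => (hNdat k).1
  have hNblock := fun k => (hNdat k).2
  -- diameter bound
  set D := Metric.diam (Set.univ : Set X) with hDdef
  have hD : ∀ a b : X, dist a b ≤ D := fun a b =>
    Metric.dist_le_diam_of_mem isCompact_univ.isBounded (Set.mem_univ a) (Set.mem_univ b)
  have hD0 : 0 ≤ D := Metric.diam_nonneg
  -- block sum bound
  have hbS : ∀ k m : ℕ, (∑ i ∈ Finset.range m, dist (f (ξ k i)) (ξ k (i + 1)))
      ≤ (N k : ℝ) * D + (m : ℝ) / 2 ^ (k + 1) := by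
    intro k m
    rcases le_or_gt (N k) m with hm | hm
    · have h1 := hNblock k m hm
      have h2 : (0 : ℝ) ≤ (N k : ℝ) * D := mul_nonneg (Nat.cast_nonneg _) hD0
      linarith
    · have h1 : (∑ i ∈ Finset.range m, dist (f (ξ k i)) (ξ k (i + 1))) ≤ (m : ℝ) * D := by
        calc (∑ i ∈ Finset.range m, dist (f (ξ k i)) (ξ k (i + 1)))
            ≤ ∑ _i ∈ Finset.range m, D := Finset.sum_le_sum (fun i _ => hD _ _)
          _ = (m : ℝ) * D := by simp [mul_comm]
      have h2 : (m : ℝ) ≤ (N k : ℝ) := by exact_mod_cast hm.le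
      have h3 : (0 : ℝ) ≤ (m : ℝ) / 2 ^ (k + 1) := by positivity
      nlinarith
  -- compactness data
  choose LA hLA1 hLA2 using fun k M => avg_unif_fail f hf (ξ k) ε hε (hns k) M
  -- constants
  set cR : ℕ → ℝ := fun r =>
    (∑ j ∈ Finset.range r, ((N j : ℝ) * D + D)) + (N r : ℝ) * D with hcR
  -- the recursion giving the block lengths
  obtain ⟨T, hT0, hTs⟩ : ∃ T : ℕ → ℕ, T 0 = 0 ∧ ∀ k, T (k + 1) = T k +
      max (max (N k) (LA k ((k + 1) * (T k + 1))))
        (max (k + 1) ⌈(2 : ℝ) ^ (k + 2) * (cR (k + 1) + T k)⌉₊) :=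
    ⟨fun k => Nat.rec 0 (fun k t => t +
      max (max (N k) (LA k ((k + 1) * (t + 1))))
        (max (k + 1) ⌈(2 : ℝ) ^ (k + 2) * (cR (k + 1) + t)⌉₊)) k, rfl, fun k => rfl⟩
  set l : ℕ → ℕ := fun k =>
      max (max (N k) (LA k ((k + 1) * (T k + 1))))
        (max (k + 1) ⌈(2 : ℝ) ^ (k + 2) * (cR (k + 1) + T k)⌉₊) with hl
  have hTl : ∀ k, T (k + 1) = T k + l k := hTs
  have hlN : ∀ k, N k ≤ l k := fun k => le_max_of_le_left (le_max_left _ _)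
  have hlLA : ∀ k, LA k ((k + 1) * (T k + 1)) ≤ l k := fun k =>
    le_max_of_le_left (le_max_right _ _)
  have hlk : ∀ k, k + 1 ≤ l k := fun k => le_max_of_le_right (le_max_left _ _)
  have hlc : ∀ k, (2 : ℝ) ^ (k + 2) * (cR (k + 1) + T k) ≤ l k := by
    intro k
    have h1 : (⌈(2 : ℝ) ^ (k + 2) * (cR (k + 1) + T k)⌉₊ : ℕ) ≤ l k :=
      le_max_of_le_right (le_max_right _ _)
    exact le_trans (Nat.le_ceil _) (by exact_mod_cast h1)
  have hlpos : ∀ k, 0 < l k := fun k => lt_of_lt_of_le (Nat.succ_pos k) (hlk k)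
  have hTsum : ∀ r, T r = ∑ j ∈ Finset.range r, l j := by
    intro r; induction r with
    | zero => simpa using hT0
    | succ r ih => rw [hTl, ih, Finset.sum_range_succ]
  have hTmono : StrictMono T := strictMono_nat_of_lt_succ (fun k => by
    rw [hTl]; exact Nat.lt_add_of_pos_right (hlpos k))
  have hTge : ∀ r, r ≤ T r := by
    intro r; induction r with
    | zero => exact Nat.zero_le _
    | succ r ih => rw [hTl]; have := hlk r; omega
  -- block index
  set blk : ℕ → ℕ := fun n => Nat.findGreatest (fun r => T r ≤ n) n with hblkdef
  have hblk1 : ∀ n, T (blk n) ≤ n := by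
    intro n
    exact Nat.findGreatest_spec (P := fun r => T r ≤ n) (m := 0) (Nat.zero_le n) (by simp [hT0])
  have hblk2 : ∀ n, n < T (blk n + 1) := by
    intro n
    by_contra hcon
    push_neg at hcon
    have h1 : blk n + 1 ≤ n := le_trans (hTge _) hcon
    exact (Nat.findGreatest_is_greatest (P := fun r => T r ≤ n)
      (Nat.lt_succ_self _) h1) hcon
  have hblkeq : ∀ r n, T r ≤ n → n < T (r + 1) → blk n = r := by
    intro r n h1 h2
    rcases lt_trichotomy (blk n) r with hlt | he | hgt
    · exact absurd h1
        (Nat.findGreatest_is_greatest (P := fun m => T m ≤ n) hlt (le_trans (hTge r) h1))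
    · exact he
    · have h3 : T (r + 1) ≤ T (blk n) := hTmono.monotone (by omega)
      have h4 := hblk1 n; omega
  -- the glued sequence
  set y : ℕ → X := fun n => ξ (blk n) (n - T (blk n)) with hy
  have hyval : ∀ r i, i < l r → y (T r + i) = ξ r i := by
    intro r i hi
    have h2 : T r + i < T (r + 1) := by rw [hTl]; omega
    have h3 := hblkeq r (T r + i) (Nat.le_add_right _ _) h2
    simp [hy, h3]
  -- mid-block sum splitting
  have hmid : ∀ r m, m < l r →
      ∑ i ∈ Finset.range (T r + m), dist (f (y i)) (y (i + 1))
        = (∑ i ∈ Finset.range (T r), dist (f (y i)) (y (i + 1)))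
          + ∑ i ∈ Finset.range m, dist (f (ξ r i)) (ξ r (i + 1)) := by
    intro r m hm
    rw [Finset.sum_range_add]
    congr 1
    refine Finset.sum_congr rfl (fun i hi => ?_)
    rw [Finset.mem_range] at hi
    have e1 : y (T r + i) = ξ r i := hyval r i (by omega)
    have e2 : y (T r + i + 1) = ξ r (i + 1) := by
      rw [Nat.add_assoc]; exact hyval r (i + 1) (by omega)
    rw [e1, e2]
  -- bound at block boundaries
  set B : ℕ → ℝ := fun r =>
    ∑ j ∈ Finset.range r, ((N j : ℝ) * D + (l j : ℝ) / 2 ^ (j + 1) + D) with hB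
  have hbound : ∀ r, ∑ i ∈ Finset.range (T r), dist (f (y i)) (y (i + 1)) ≤ B r := by
    intro r; induction r with
    | zero => simp [hT0, hB]
    | succ r ih =>
      have h1 : T (r + 1) = (T r + (l r - 1)) + 1 := by
        rw [hTl]; have := hlpos r; omega
      rw [h1, Finset.sum_range_succ, hmid r (l r - 1) (by have := hlpos r; omega)]
      have h2 : ∑ i ∈ Finset.range (l r - 1), dist (f (ξ r i)) (ξ r (i + 1))
          ≤ (N r : ℝ) * D + (l r : ℝ) / 2 ^ (r + 1) := by
        refine le_trans (hbS r (l r - 1)) ?_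
        have h3 : ((l r - 1 : ℕ) : ℝ) ≤ (l r : ℝ) := by exact_mod_cast Nat.sub_le _ _
        gcongr
      have h3 : dist (f (y (T r + (l r - 1)))) (y (T r + (l r - 1) + 1)) ≤ D := hD _ _
      have hBs : B (r + 1) = B r + ((N r : ℝ) * D + (l r : ℝ) / 2 ^ (r + 1) + D) :=
        Finset.sum_range_succ _ r
      linarith
  -- main estimate: the glued sequence is an asymptotic average pseudo-orbit
  have hS : ∀ k n : ℕ, T (k + 1) ≤ n →
      ∑ i ∈ Finset.range n, dist (f (y i)) (y (i + 1)) ≤ (n : ℝ) * (1 / 2) ^ k := by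
    intro k n hn
    set r := blk n with hr
    have h1 : T r ≤ n := hblk1 n
    have h2 : n < T (r + 1) := hblk2 n
    have hkr : k + 1 ≤ r := by
      by_contra hcon
      push_neg at hcon
      have h3 : T (r + 1) ≤ T (k + 1) := hTmono.monotone (by omega)
      omega
    obtain ⟨s, hs⟩ : ∃ s, r = s + 1 := ⟨r - 1, by omega⟩
    set m := n - T r with hm
    have hmlt : m < l r := by have := hTl r; omega
    have hneq : n = T r + m := by omega
    have hsum : ∑ i ∈ Finset.range n, dist (f (y i)) (y (i + 1))
        ≤ B r + ((N r : ℝ) * D + (m : ℝ) / 2 ^ (r + 1)) := by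
      rw [hneq, hmid r m hmlt]
      have h3 := hbS r m
      have h4 := hbound r
      linarith
    have hsplit : B r + (N r : ℝ) * D = cR r + ∑ j ∈ Finset.range r, (l j : ℝ) / 2 ^ (j + 1) := by
      simp only [hB, hcR]
      rw [show (fun j => (N j : ℝ) * D + (l j : ℝ) / 2 ^ (j + 1) + D)
          = fun j => ((N j : ℝ) * D + D) + (l j : ℝ) / 2 ^ (j + 1) from funext (fun j => by ring),
        Finset.sum_add_distrib]
      ring
    have htail : ∑ j ∈ Finset.range r, (l j : ℝ) / 2 ^ (j + 1)
        = (∑ j ∈ Finset.range s, (l j : ℝ) / 2 ^ (j + 1)) + (l s : ℝ) / 2 ^ (s + 1) := by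
      rw [hs, Finset.sum_range_succ]
    have hTs' : (∑ j ∈ Finset.range s, (l j : ℝ) / 2 ^ (j + 1)) ≤ (T s : ℝ) := by
      rw [hTsum s]
      push_cast
      refine Finset.sum_le_sum (fun j _ => ?_)
      rw [div_le_iff₀ (by positivity)]
      have h5 : (1 : ℝ) ≤ 2 ^ (j + 1) := one_le_pow₀ (by norm_num)
      nlinarith [Nat.cast_nonneg (α := ℝ) (l j)]
    have hcle : cR r + (T s : ℝ) ≤ (l s : ℝ) / 2 ^ (s + 2) := by
      have h5 := hlc s
      rw [← hs] at h5
      rw [le_div_iff₀ (by positivity : (0:ℝ) < 2 ^ (s + 2))]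
      linarith [h5]
    have hls_le_n : (l s : ℝ) ≤ (n : ℝ) := by
      have h5 : l s ≤ T r := by rw [hs, hTl s]; omega
      exact_mod_cast le_trans h5 h1
    have hm_le_n : (m : ℝ) ≤ (n : ℝ) := by exact_mod_cast (by omega : m ≤ n)
    have hrs : r + 1 = s + 2 := by omega
    have e4 : ∑ i ∈ Finset.range n, dist (f (y i)) (y (i + 1))
        ≤ (n : ℝ) / 2 ^ (s + 2) + (n : ℝ) / 2 ^ (s + 1) + (n : ℝ) / 2 ^ (s + 2) := by
      have g1 : (l s : ℝ) / 2 ^ (s + 2) ≤ (n : ℝ) / 2 ^ (s + 2) := by gcongr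
      have g2 : (l s : ℝ) / 2 ^ (s + 1) ≤ (n : ℝ) / 2 ^ (s + 1) := by gcongr
      have g3 : (m : ℝ) / 2 ^ (r + 1) ≤ (n : ℝ) / 2 ^ (s + 2) := by rw [hrs]; gcongr
      calc ∑ i ∈ Finset.range n, dist (f (y i)) (y (i + 1))
          ≤ B r + ((N r : ℝ) * D + (m : ℝ) / 2 ^ (r + 1)) := hsum
        _ = (B r + (N r : ℝ) * D) + (m : ℝ) / 2 ^ (r + 1) := by ring
        _ = cR r + ((∑ j ∈ Finset.range s, (l j : ℝ) / 2 ^ (j + 1)) + (l s : ℝ) / 2 ^ (s + 1))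
              + (m : ℝ) / 2 ^ (r + 1) := by rw [hsplit, htail]
        _ ≤ (cR r + (T s : ℝ)) + (l s : ℝ) / 2 ^ (s + 1) + (m : ℝ) / 2 ^ (r + 1) := by linarith
        _ ≤ (l s : ℝ) / 2 ^ (s + 2) + (l s : ℝ) / 2 ^ (s + 1) + (m : ℝ) / 2 ^ (r + 1) := by
              linarith
        _ ≤ (n : ℝ) / 2 ^ (s + 2) + (n : ℝ) / 2 ^ (s + 1) + (n : ℝ) / 2 ^ (s + 2) := by
              linarith
    have e5 : (n : ℝ) / 2 ^ (s + 2) + (n : ℝ) / 2 ^ (s + 1) + (n : ℝ) / 2 ^ (s + 2)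
        = (n : ℝ) * (1 / 2) ^ s := by
      rw [div_pow, one_pow]
      field_simp
      ring
    have hks : k ≤ s := by omega
    have e6 : (n : ℝ) * (1 / 2) ^ s ≤ (n : ℝ) * (1 / 2) ^ k := by
      have := pow_le_pow_of_le_one (by norm_num : (0:ℝ) ≤ 1/2) (by norm_num : (1:ℝ)/2 ≤ 1) hks
      exact mul_le_mul_of_nonneg_left this (Nat.cast_nonneg n)
    linarith [e4, e5.le, e6]
  have hAAPO : AsympAvgPseudoOrbit f y := by
    rw [AsympAvgPseudoOrbit, Metric.tendsto_atTop]
    intro η hη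
    obtain ⟨k, hk⟩ := exists_pow_lt_of_lt_one hη (by norm_num : (1 : ℝ) / 2 < 1)
    refine ⟨T (k + 1) + 1, fun n hn => ?_⟩
    have hn1 : 1 ≤ n := by omega
    have hn0 : (0 : ℝ) < n := by exact_mod_cast hn1
    have hnn : 0 ≤ ∑ i ∈ Finset.range n, dist (f (y i)) (y (i + 1)) :=
      Finset.sum_nonneg (fun i _ => dist_nonneg)
    rw [Real.dist_eq, sub_zero, abs_of_nonneg (by positivity)]
    have h6 := hS k n (by omega)
    calc (∑ i ∈ Finset.range n, dist (f (y i)) (y (i + 1))) / n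
        ≤ (1 / 2) ^ k := by rw [div_le_iff₀ hn0]; linarith [mul_comm ((n : ℝ)) ((1/2 : ℝ) ^ k)]
      _ < η := hk
  obtain ⟨z, hz⟩ := h y hAAPO
  rw [AsympShadowedInAvg, Metric.tendsto_atTop] at hz
  obtain ⟨N₀, hN₀⟩ := hz (ε / 4) (by linarith)
  obtain ⟨nk, hnk1, hnk2, hnk3⟩ := hLA2 N₀ ((N₀ + 1) * (T N₀ + 1)) (f^[T N₀] z)
  have hnkl : nk ≤ l N₀ := le_trans hnk2 (hlLA N₀)
  set Nn := T N₀ + nk with hNn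
  have hA : ε / 2 * nk ≤ ∑ i ∈ Finset.range Nn, dist (f^[i] z) (y i) := by
    rw [hNn, Finset.sum_range_add]
    have h1 : ∑ i ∈ Finset.range nk, dist (f^[T N₀ + i] z) (y (T N₀ + i))
        = ∑ i ∈ Finset.range nk, dist (f^[i] (f^[T N₀] z)) (ξ N₀ i) := by
      refine Finset.sum_congr rfl (fun i hi => ?_)
      rw [Finset.mem_range] at hi
      rw [hyval N₀ i (lt_of_lt_of_le hi hnkl), Nat.add_comm, Function.iterate_add_apply]
    have h0 : 0 ≤ ∑ i ∈ Finset.range (T N₀), dist (f^[i] z) (y i) :=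
      Finset.sum_nonneg (fun _ _ => dist_nonneg)
    rw [h1]
    linarith [hnk3]
  have hTk_lt : T N₀ + 1 ≤ nk :=
    le_trans (Nat.le_mul_of_pos_left _ (Nat.succ_pos N₀)) hnk1
  have hNnk : Nn ≤ 2 * nk := by omega
  have hk1nk : N₀ + 1 ≤ nk := by
    have h7 : N₀ + 1 ≤ (N₀ + 1) * (T N₀ + 1) := Nat.le_mul_of_pos_right _ (Nat.succ_pos _)
    omega
  have hNnN₀ : N₀ ≤ Nn := by omega
  have h8 := hN₀ Nn hNnN₀
  rw [Real.dist_eq, sub_zero] at h8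
  have hNn0 : (0 : ℝ) < Nn := by
    have : 1 ≤ Nn := by omega
    exact_mod_cast this
  have habs : (∑ i ∈ Finset.range Nn, dist (f^[i] z) (y i)) / Nn < ε / 4 :=
    lt_of_abs_lt h8
  rw [div_lt_iff₀ hNn0] at habs
  have hcast : (Nn : ℝ) ≤ 2 * nk := by exact_mod_cast hNnk
  nlinarith [hA, habs, hε, hcast]
end

section
/- Let (X,f) be a dynamical system with X a compact metric space and f : X → X a continuous map which is chain mixing. Then f has the average shadowing property if and only if for every ε > 0 there is δ > 0 such that every (genuine) δ-pseudo-orbit {x_i}_{i≥0} of f is ε-shadowed in average by some point of X. -/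
open Filter Metric Set MeasureTheory Topology

/-!
Cut a `δ'`-average-pseudo-orbit into blocks of length `N`, where by chain mixing and compactness
any two points are joined by a `δ`-chain of length exactly `N`. Replacing every block that contains
a jump `≥ δ` by such a chain between its endpoints gives a genuine `δ`-pseudo-orbit. By Markov's
inequality the jumps `≥ δ` have density at most `δ' / δ`, so the replaced blocks occupy a fraction
`O(N δ' / δ)` of time, and a point shadowing the new orbit in average also shadows the old one.
-/

open Finset

section PseudoOrbits

variable {X : Type*} [MetricSpace X] {f : X → X}

namespace FinChain

variable {δ δ' : ℝ} {m n : ℕ} {x y z : X}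

lemma mono (h : FinChain f δ n x y) (hδ : δ ≤ δ') : FinChain f δ' n x y := by
  obtain ⟨c, hc0, hcn, hc⟩ := h
  exact ⟨c, hc0, hcn, fun i hi => (hc i hi).trans_le hδ⟩

lemma single (h : dist (f x) y < δ) : FinChain f δ 1 x y :=
  ⟨fun i => if i = 0 then x else y, rfl, rfl, fun i hi => by
    obtain rfl : i = 0 := by omega
    simpa using h⟩

lemma append (h₁ : FinChain f δ m x y) (h₂ : FinChain f δ n y z) :
    FinChain f δ (m + n) x z := by
  obtain ⟨c₁, hc₁0, hc₁m, hc₁⟩ := h₁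
  obtain ⟨c₂, hc₂0, hc₂n, hc₂⟩ := h₂
  set c : ℕ → X := fun i => if i ≤ m then c₁ i else c₂ (i - m)
  have hc_right : ∀ i, m ≤ i → c i = c₂ (i - m) := by
    intro i hi
    rcases hi.eq_or_lt with rfl | hi
    · simp [c, hc₁m, hc₂0]
    · simp [c, hi.not_ge]
  refine ⟨c, by simp [c, hc₁0], by rw [hc_right _ (by omega), Nat.add_sub_cancel_left, hc₂n],
    fun i hi => ?_⟩
  by_cases him : i < m
  · simpa [c, him.le, Nat.succ_le_of_lt him] using hc₁ i him
  · rw [hc_right i (by omega), hc_right (i + 1) (by omega), Nat.sub_add_comm (by omega)]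
    exact hc₂ (i - m) (by omega)

lemma of_dist_target_lt (h : FinChain f δ n x y) (hn : 0 < n) (hyz : dist y z < δ') :
    FinChain f (δ + δ') n x z := by
  obtain ⟨c, hc0, hcn, hc⟩ := h
  refine ⟨fun i => if i = n then z else c i, by simp [hn.ne, hc0], by simp, fun i hi => ?_⟩
  simp only [hi.ne, if_false]
  split_ifs with hin
  · calc dist (f (c i)) z ≤ dist (f (c i)) (c (i + 1)) + dist (c (i + 1)) z := dist_triangle _ _ _
      _ < δ + δ' := add_lt_add (hc i hi) (by rwa [hin, hcn])
  · linarith [hc i hi, dist_nonneg.trans_lt hyz]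

end FinChain

namespace ChainMixing

variable {δ : ℝ}

lemma eventually_finChain (hcm : ChainMixing f) (hδ : 0 < δ) (x y : X) :
    ∀ᶠ n in atTop, FinChain f δ n x y :=
  let ⟨N, _, hN⟩ := hcm δ hδ x y
  eventually_atTop.2 ⟨N, hN⟩

/-- Connect the points of a finite `δ/2`-net by chains of a common length, then adjust both ends. -/
lemma exists_finChain_uniform [CompactSpace X] (hcm : ChainMixing f) (hδ : 0 < δ) :
    ∃ N, 0 < N ∧ ∀ u v, FinChain f δ N u v := by
  obtain ⟨t, -, ht, hcover⟩ := finite_cover_balls_of_compact (isCompact_univ (X := X)) (half_pos hδ)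
  have hnet : ∀ w, ∃ p ∈ t, dist w p < δ / 2 := fun w => by simpa using hcover (mem_univ w)
  obtain ⟨M, hM, hM0⟩ := (((eventually_all_finite ht).2 fun p _ => (eventually_all_finite ht).2
    fun q _ => hcm.eventually_finChain (half_pos hδ) p q).and (eventually_gt_atTop 0)).exists
  refine ⟨1 + M, by omega, fun u v => ?_⟩
  obtain ⟨p, hp, hup⟩ := hnet (f u)
  obtain ⟨q, hq, hvq⟩ := hnet v
  have hpv := (hM p hp q hq).of_dist_target_lt hM0 (by rwa [dist_comm])
  rw [add_halves] at hpv
  exact ((FinChain.single hup).mono (half_le_self hδ.le)).append hpv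

end ChainMixing

lemma PseudoOrbit.avgPseudoOrbit {δ : ℝ} {x : ℕ → X} (hx : PseudoOrbit f δ x) :
    AvgPseudoOrbit f δ x := by
  refine ⟨1, one_pos, fun n hn k => ?_⟩
  rw [div_lt_iff₀ (by exact_mod_cast hn)]
  calc ∑ i ∈ range n, dist (f (x (i + k))) (x (i + k + 1))
      < ∑ _i ∈ range n, δ :=
        sum_lt_sum_of_nonempty (nonempty_range_iff.2 (by omega)) fun i _ => hx _
    _ = δ * n := by simp [mul_comm]

lemma pseudoOrbit_of_blocks {δ : ℝ} {N : ℕ} (hN : 0 < N) (c : ℕ → ℕ → X)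
    (hc : ∀ k, ∀ j < N, dist (f (c k j)) (c k (j + 1)) < δ) (hglue : ∀ k, c k N = c (k + 1) 0) :
    PseudoOrbit f δ fun i => c (i / N) (i % N) := by
  have hdivmod : ∀ k j, j < N → (N * k + j) / N = k ∧ (N * k + j) % N = j :=
    fun k j hj => (Nat.div_mod_unique hN).2 ⟨by ring, hj⟩
  intro i
  obtain ⟨k, j, hj, rfl⟩ : ∃ k j, j < N ∧ i = N * k + j :=
    ⟨i / N, i % N, Nat.mod_lt i hN, (Nat.div_add_mod i N).symm⟩
  obtain ⟨hk, hj'⟩ := hdivmod k j hj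
  simp only [hk, hj']
  rcases (Nat.succ_le_of_lt hj).lt_or_eq with hj1 | hj1
  · obtain ⟨hk1, hj1'⟩ := hdivmod k (j + 1) hj1
    rw [add_assoc, hk1, hj1']
    exact hc k j hj
  · obtain ⟨hk1, hj1'⟩ := hdivmod (k + 1) 0 hN
    have : N * k + j + 1 = N * (k + 1) + 0 := by rw [Nat.mul_succ]; omega
    rw [this, hk1, hj1', ← hglue, ← hj1]
    exact hc k j hj

lemma exists_pseudoOrbit_eq_of_good_block {δ : ℝ} {N : ℕ} (hN : 0 < N)
    (hchain : ∀ u v, FinChain f δ N u v) (x : ℕ → X) :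
    ∃ z : ℕ → X, PseudoOrbit f δ z ∧ ∀ i,
      (∀ j < N, dist (f (x (N * (i / N) + j))) (x (N * (i / N) + j + 1)) < δ) → z i = x i := by
  classical
  choose c hc0 hcN hc using hchain
  set b : ℕ → ℕ → X := fun k =>
    if ∀ j < N, dist (f (x (N * k + j))) (x (N * k + j + 1)) < δ then fun j => x (N * k + j)
    else c (x (N * k)) (x (N * k + N))
  refine ⟨fun i => b (i / N) (i % N), pseudoOrbit_of_blocks hN b (fun k j hj => ?_) (fun k => ?_),
    fun i hi => by simp only [b, if_pos hi, Nat.div_add_mod]⟩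
  · by_cases hk : ∀ j < N, dist (f (x (N * k + j))) (x (N * k + j + 1)) < δ
    · simpa only [b, if_pos hk, ← add_assoc] using hk j hj
    · simpa only [b, if_neg hk] using hc _ _ j hj
  · have hb0 : ∀ k, b k 0 = x (N * k) := fun k => by unfold b; split_ifs <;> simp [hc0]
    have hbN : b k N = x (N * k + N) := by unfold b; split_ifs <;> simp [hcN]
    rw [hbN, hb0, Nat.mul_succ]

lemma card_filter_exists_block_le (p : ℕ → Prop) [DecidablePred p] (N n : ℕ) :
    #{i ∈ range n | ∃ j < N, p (N * (i / N) + j)} ≤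
      N * #{e ∈ range (n + N) | p e} := by
  rw [mul_comm]
  refine (card_le_card fun i hi => ?_).trans (card_biUnion_le_card_mul
    {e ∈ range (n + N) | p e} (fun e => Ico (N * (e / N)) (N * (e / N) + N)) N
    fun e _ => by simp)
  obtain ⟨hin, j, hj, hp⟩ := by simpa only [Finset.mem_filter, Finset.mem_range] using hi
  have hN : 0 < N := by omega
  have hblock : (N * (i / N) + j) / N = i / N := ((Nat.div_mod_unique hN).2 ⟨by ring, hj⟩).1
  have hdiv := Nat.div_add_mod i N
  have hmod := Nat.mod_lt i hN
  simp only [Finset.mem_biUnion, Finset.mem_filter, Finset.mem_range, Finset.mem_Ico]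
  exact ⟨N * (i / N) + j, ⟨by omega, hp⟩, by rw [hblock]; omega⟩

lemma card_filter_mul_le_sum {ι : Type*} (s : Finset ι) (a : ι → ℝ) (ha : ∀ i ∈ s, 0 ≤ a i)
    (δ : ℝ) [DecidablePred fun i => δ ≤ a i] : #{i ∈ s | δ ≤ a i} * δ ≤ ∑ i ∈ s, a i := by
  calc #{i ∈ s | δ ≤ a i} * δ = #{i ∈ s | δ ≤ a i} • δ := (nsmul_eq_mul _ _).symm
    _ ≤ ∑ i ∈ s with δ ≤ a i, a i :=
        card_nsmul_le_sum _ _ _ fun i hi => (mem_filter.1 hi).2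
    _ ≤ ∑ i ∈ s, a i :=
        sum_le_sum_of_subset_of_nonneg (filter_subset _ _) fun i hi _ => ha i hi

noncomputable def avgDist (a b : ℕ → X) (n : ℕ) : ℝ :=
  (∑ i ∈ range n, dist (a i) (b i)) / n

lemma dist_le_diam_univ [BoundedSpace X] (a b : X) : dist a b ≤ diam (univ : Set X) :=
  dist_le_diam_of_mem (Bornology.IsBounded.all _) (Set.mem_univ a) (Set.mem_univ b)

lemma avgDist_nonneg (a b : ℕ → X) (n : ℕ) : 0 ≤ avgDist a b n := by
  unfold avgDist
  positivity

lemma avgDist_le_diam [BoundedSpace X] (a b : ℕ → X) (n : ℕ) :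
    avgDist a b n ≤ diam (univ : Set X) := by
  rcases n.eq_zero_or_pos with rfl | hn
  · simpa [avgDist] using diam_nonneg
  rw [avgDist, div_le_iff₀ (by exact_mod_cast hn)]
  calc ∑ i ∈ range n, dist (a i) (b i) ≤ #(range n) • diam (univ : Set X) :=
        sum_le_card_nsmul _ _ _ fun i _ => dist_le_diam_univ (a i) (b i)
    _ = diam univ * n := by simp [mul_comm]

lemma avgDist_triangle (a b c : ℕ → X) (n : ℕ) :
    avgDist a c n ≤ avgDist a b n + avgDist b c n := by
  unfold avgDist
  rw [← add_div, ← sum_add_distrib]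
  gcongr
  exact dist_triangle _ _ _

lemma ShadowedInAvg.of_eventually_avgDist_le [BoundedSpace X] {ε₁ C ε : ℝ} {x z : ℕ → X} {y : X}
    (h : ShadowedInAvg f ε₁ z y) (hzx : ∀ᶠ n in atTop, avgDist z x n ≤ C) (hε : ε₁ + C < ε) :
    ShadowedInAvg f ε x y := by
  change limsup (avgDist (fun i => f^[i] y) x) atTop < ε
  have hyz : ∀ᶠ n in atTop, avgDist (fun i => f^[i] y) z n < ε₁ :=
    eventually_lt_of_limsup_lt h
      ⟨diam univ, eventually_map.2 (Eventually.of_forall fun n => avgDist_le_diam _ _ n)⟩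
  calc limsup (avgDist (fun i => f^[i] y) x) atTop
      ≤ ε₁ + C := limsup_le_of_le (isCoboundedUnder_le_of_le atTop (avgDist_nonneg _ _)) <| by
        filter_upwards [hyz, hzx] with n hyzn hzxn
        linarith [avgDist_triangle (fun i => f^[i] y) z x n]
    _ < ε := hε

lemma AvgPseudoOrbit.eventually_avgDist_le [BoundedSpace X] {δ δ' : ℝ} {N : ℕ} {x z : ℕ → X}
    (hx : AvgPseudoOrbit f δ' x) (hδ : 0 < δ)
    (hzx : ∀ i, (∀ j < N, dist (f (x (N * (i / N) + j))) (x (N * (i / N) + j + 1)) < δ) →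
      z i = x i) :
    ∀ᶠ n in atTop, avgDist z x n ≤ 2 * N * diam (univ : Set X) / δ * δ' := by
  classical
  obtain ⟨N₀, -, hN₀⟩ := hx
  filter_upwards [eventually_ge_atTop N₀, eventually_ge_atTop N, eventually_gt_atTop 0]
    with n hnN₀ hnN hn
  set D := diam (univ : Set X)
  set jump : ℕ → ℝ := fun e => dist (f (x e)) (x (e + 1))
  have hsum : ∑ i ∈ range n, dist (z i) (x i) ≤
      #{i ∈ range n | ∃ j < N, δ ≤ jump (N * (i / N) + j)} * D := by
    rw [← sum_filter_add_sum_filter_not (range n) fun i => ∃ j < N, δ ≤ jump (N * (i / N) + j),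
      sum_eq_zero (s := {i ∈ range n | ¬∃ j < N, δ ≤ jump (N * (i / N) + j)}) fun i hi => by
        rw [hzx i (by simpa [jump] using (mem_filter.1 hi).2), dist_self],
      add_zero, ← nsmul_eq_mul]
    exact sum_le_card_nsmul _ _ _ fun i _ => dist_le_diam_univ (z i) (x i)
  have hjumps : #{e ∈ range (n + N) | δ ≤ jump e} * δ < (n + N) * δ' := by
    have := hN₀ (n + N) (by omega) 0
    simp only [add_zero] at this
    rw [div_lt_iff₀ (by positivity)] at this
    push_cast at this
    exact (card_filter_mul_le_sum _ jump (fun _ _ => dist_nonneg) δ).trans_lt (by linarith)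
  have hcard : (#{e ∈ range (n + N) | δ ≤ jump e} : ℝ) ≤ 2 * n * δ' / δ := by
    have hnN' : (n : ℝ) + N ≤ 2 * n := by norm_cast; omega
    have hcard₀ : (0 : ℝ) ≤ #{e ∈ range (n + N) | δ ≤ jump e} := by positivity
    have hδ' : 0 ≤ δ' := by nlinarith
    rw [le_div_iff₀ hδ]
    nlinarith
  rw [avgDist, div_le_iff₀ (by exact_mod_cast hn)]
  calc ∑ i ∈ range n, dist (z i) (x i)
      ≤ #{i ∈ range n | ∃ j < N, δ ≤ jump (N * (i / N) + j)} * D := hsum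
    _ ≤ (N * #{e ∈ range (n + N) | δ ≤ jump e} : ℕ) * D := by
        gcongr
        exact card_filter_exists_block_le (fun e => δ ≤ jump e) N n
    _ ≤ N * (2 * n * δ' / δ) * D := by
        push_cast
        gcongr
    _ = 2 * N * D / δ * δ' * n := by ring

theorem avgShadowing_of_pseudoOrbits_shadowed [CompactSpace X] (hcm : ChainMixing f)
    (h : ∀ ε : ℝ, 0 < ε → ∃ δ : ℝ, 0 < δ ∧
      ∀ x : ℕ → X, PseudoOrbit f δ x → ∃ y : X, ShadowedInAvg f ε x y) :
    AvgShadowing f := by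
  intro ε hε
  obtain ⟨δ, hδ, hshadow⟩ := h (ε / 2) (half_pos hε)
  obtain ⟨N, hN, hchain⟩ := hcm.exists_finChain_uniform hδ
  set K := 2 * N * diam (univ : Set X) / δ
  have hK : 0 ≤ K := by positivity
  refine ⟨ε / 2 / (K + 1), by positivity, fun x hx => ?_⟩
  obtain ⟨z, hz, hzx⟩ := exists_pseudoOrbit_eq_of_good_block hN hchain x
  obtain ⟨y, hy⟩ := hshadow z hz
  refine ⟨y, hy.of_eventually_avgDist_le (hx.eventually_avgDist_le hδ hzx) ?_⟩
  have : K * (ε / 2 / (K + 1)) < ε / 2 := by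
    rw [← mul_div_assoc, div_lt_iff₀ (by positivity)]
    nlinarith
  linarith

end PseudoOrbits

theorem avgShadowing_iff_pseudoOrbits_shadowed_general
    {X : Type*} [MetricSpace X] [CompactSpace X]
    (f : X → X) (hcm : ChainMixing f) :
    AvgShadowing f ↔
      ∀ ε : ℝ, 0 < ε → ∃ δ : ℝ, 0 < δ ∧
        ∀ x : ℕ → X, PseudoOrbit f δ x → ∃ y : X, ShadowedInAvg f ε x y :=
  ⟨fun h ε hε => (h ε hε).imp fun _ ⟨hδ, hshadow⟩ =>
    ⟨hδ, fun x hx => hshadow x hx.avgPseudoOrbit⟩, avgShadowing_of_pseudoOrbits_shadowed hcm⟩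

/-- For a chain mixing continuous map on a compact metric space,
the average shadowing property is equivalent to average shadowing of genuine
pseudo-orbits. -/
theorem avgShadowing_iff_pseudoOrbits_shadowed
    {X : Type*} [MetricSpace X] [CompactSpace X]
    (f : X → X) (hf : Continuous f) (hcm : ChainMixing f) :
    AvgShadowing f ↔
      ∀ ε : ℝ, 0 < ε → ∃ δ : ℝ, 0 < δ ∧
        ∀ x : ℕ → X, PseudoOrbit f δ x → ∃ y : X, ShadowedInAvg f ε x y :=
  avgShadowing_iff_pseudoOrbits_shadowed_general f hcm
end

section
/- Let (X,f) be a dynamical system with X a compact metric space and f : X → X continuous. Assume f admits an invariant Borel probability measure with full support. If f has the almost specification property, then the set of minimal points of f is dense in X. -/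
open Filter Metric Set MeasureTheory Topology

/-! Fix a ball `B = ball p ε`; full support gives `μ B > 0`. Since `g(n, ε) = o(n)`, pick a
block length `n ≥ k_g(ε)` with `g(n, ε) < n μ(B)`. Integrating the number of visits to `B` before
time `n` against the invariant measure yields a point `x` with more than `g(n, ε)` such visits. A
point of `B_n(g; x, ε)` follows `x` at all but `g(n, ε)` times before `n`, so it comes `2ε`-close to
`p` before time `n`. Almost specification, applied to arbitrarily many copies of this orbit
segment, together with compactness produces a point `z` returning to `closedBall p (2ε)` in every
block `[jn, (j+1)n)`. Then the whole orbit closure of `z` returns to that closed ball with gaps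
less than `2n`, in particular a minimal point of the orbit closure does, and some iterate of it is
a minimal point near `p`. -/

open scoped ENNReal

section Measure

variable {α : Type*} [MeasurableSpace α] {μ : Measure α} {f : α → α}

theorem InvariantProb.measurePreserving {X : Type*} [MetricSpace X] [MeasurableSpace X]
    {f : X → X} {μ : Measure X} (hμ : InvariantProb f μ) (hf : Measurable f) :
    MeasurePreserving f μ μ :=
  ⟨hf, Measure.ext fun B hB => by rw [Measure.map_apply hf hB, hμ.2 B hB]⟩

open Classical Finset in
theorem MeasureTheory.MeasurePreserving.exists_le_card_iterate_mem [IsProbabilityMeasure μ]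
    (hf : MeasurePreserving f μ μ) {B : Set α} (hB : MeasurableSet B) (n : ℕ) :
    ∃ x, n * μ B ≤ #{i ∈ range n | f^[i] x ∈ B} := by
  have hvisits : ∀ x, ∑ i ∈ range n, B.indicator (1 : α → ℝ≥0∞) (f^[i] x) =
      (#{i ∈ range n | f^[i] x ∈ B} : ℝ≥0∞) := fun x => by
    simp only [Set.indicator_apply, Pi.one_apply, ← sum_boole]
  have hmean : ∫⁻ x, ∑ i ∈ range n, B.indicator (1 : α → ℝ≥0∞) (f^[i] x) ∂μ = n * μ B := by
    rw [lintegral_finsetSum (f := fun i x => B.indicator 1 (f^[i] x)) _ fun i _ =>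
      (measurable_one.indicator hB).comp (hf.iterate i).measurable]
    simp only [(hf.iterate _).lintegral_comp (measurable_one.indicator hB),
      lintegral_indicator_one hB, sum_const, card_range, nsmul_eq_mul]
  have hfinite : ∫⁻ x, ∑ i ∈ range n, B.indicator (1 : α → ℝ≥0∞) (f^[i] x) ∂μ ≠ ⊤ :=
    hmean ▸ ENNReal.mul_ne_top (ENNReal.natCast_ne_top n) (measure_ne_top μ B)
  obtain ⟨x, hx⟩ := exists_lintegral_le hfinite
  exact ⟨x, hmean ▸ hvisits x ▸ hx⟩

end Measure

section AlmostSpecification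

variable {X : Type*} [MetricSpace X] {f : X → X} {g : ℕ → ℝ → ℕ}

theorem IsMistakeFun.tendsto_div {ε₀ ε : ℝ} (hg : IsMistakeFun g ε₀) (hε : 0 < ε) :
    Tendsto (fun n : ℕ => (g n ε : ℝ) / n) atTop (𝓝 0) := by
  rcases le_or_gt ε ε₀ with hεε₀ | hε₀ε
  · exact hg.small ε hε hεε₀
  · simpa only [hg.ext _ _ hε₀ε] using hg.small ε₀ hg.pos le_rfl

theorem IsMistakeFun.eventually_lt_mul {ε₀ ε : ℝ} (hg : IsMistakeFun g ε₀) (hε : 0 < ε)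
    {a : ℝ≥0∞} (ha : 0 < a) (ha_top : a ≠ ⊤) :
    ∀ᶠ n : ℕ in atTop, (g n ε : ℝ≥0∞) < n * a := by
  filter_upwards [(hg.tendsto_div hε).eventually_lt_const (ENNReal.toReal_pos ha.ne' ha_top),
    eventually_gt_atTop 0] with n hn hn_pos
  rw [div_lt_iff₀ (by exact_mod_cast hn_pos)] at hn
  rw [← ENNReal.ofReal_toReal ha_top, ← ENNReal.ofReal_natCast, ← ENNReal.ofReal_natCast n,
    ← ENNReal.ofReal_mul (Nat.cast_nonneg n)]
  exact (ENNReal.ofReal_lt_ofReal_iff_of_nonneg (Nat.cast_nonneg _)).2 (by linarith)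

open Classical Finset in
theorem exists_iterate_mem_ball_of_mem_mistakeBowenBall {n : ℕ} {ε : ℝ} {x p y : X}
    (hvisits : g n ε < #{i ∈ range n | f^[i] x ∈ ball p ε})
    (hy : y ∈ mistakeBowenBall f g n x ε) : ∃ i < n, f^[i] y ∈ ball p (2 * ε) := by
  obtain ⟨Λ, ⟨hΛn, hΛcard⟩, hΛ⟩ := mem_iUnion₂.1 hy
  have hcommon : ({i ∈ range n | f^[i] x ∈ ball p ε} ∩ Λ).Nonempty := by
    refine inter_nonempty_of_card_lt_card_add_card (filter_subset _ _) hΛn ?_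
    have := card_filter_le (range n) (fun i => f^[i] x ∈ ball p ε)
    rw [card_range] at this ⊢
    omega
  obtain ⟨i, hi⟩ := hcommon
  rw [Finset.mem_inter, mem_filter, Finset.mem_range, mem_ball] at hi
  obtain ⟨⟨hin, hix⟩, hiΛ⟩ := hi
  refine ⟨i, hin, mem_ball.2 ?_⟩
  calc dist (f^[i] y) p ≤ dist (f^[i] x) (f^[i] y) + dist (f^[i] x) p := dist_triangle_left _ _ _
    _ < ε + ε := add_lt_add (hΛ i hiΛ) hix
    _ = 2 * ε := by ring

theorem AlmostSpecWith.exists_forall_iterate_mul_mem [CompactSpace X] {kg : ℝ → ℕ}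
    (hspec : AlmostSpecWith f g kg) (hf : Continuous f) {n : ℕ} {ε : ℝ} (hε : 0 < ε)
    (hn : kg ε ≤ n) {x : X} {S : Set X} (hS : IsClosed S)
    (hxS : mistakeBowenBall f g n x ε ⊆ S) : ∃ z, ∀ j, f^[j * n] z ∈ S := by
  set C : ℕ → Set X := fun m => ⋂ j ∈ Iic m, f^[j * n] ⁻¹' S
  have hC_closed : ∀ m, IsClosed (C m) := fun m =>
    isClosed_biInter fun j _ => hS.preimage (hf.iterate _)
  have hC_nonempty : ∀ m, (C m).Nonempty := fun m => by
    obtain ⟨z, hz⟩ := hspec (m + 1) (by omega) (fun _ => ε) (fun _ => x) (fun _ => n)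
      (fun _ _ _ => hε) (fun _ _ _ => hn)
    refine ⟨z, mem_iInter₂.2 fun j hj => hxS ?_⟩
    simpa [Finset.sum_const, mul_comm] using hz (j + 1) (by omega) (by simp at hj; omega)
  obtain ⟨z, hz⟩ := IsCompact.nonempty_iInter_of_sequence_nonempty_isCompact_isClosed C
    (fun m => biInter_subset_biInter_left (Iic_subset_Iic.2 m.le_succ)) hC_nonempty
    (hC_closed 0).isCompact hC_closed
  exact ⟨z, fun j => mem_iInter₂.1 (mem_iInter.1 hz j) j self_mem_Iic⟩

theorem closure_fOrbit_subset_of_forall_iterate_mul_mem (hf : Continuous f) {K : Set X}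
    (hK : IsClosed K) {n : ℕ} {z : X} (hz : ∀ j, f^[j * n] z ∈ ⋃ i < n, f^[i] ⁻¹' K) :
    closure (fOrbit f z) ⊆ ⋃ t < 2 * n, f^[t] ⁻¹' K := by
  refine closure_minimal ?_
    ((finite_lt_nat _).isClosed_biUnion fun t _ => hK.preimage (hf.iterate t))
  rintro _ ⟨s, rfl⟩
  -- the block starting at `(s / n + 1) * n` lies within `[s, s + 2n)`
  obtain ⟨i, hi, hiK⟩ := mem_iUnion₂.1 (hz (s / n + 1))
  have hdiv := Nat.div_add_mod' s n
  have hmod := Nat.mod_lt s (by omega : 0 < n)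
  have hmul : (s / n + 1) * n = s / n * n + n := by ring
  refine mem_iUnion₂.2 ⟨(s / n + 1) * n + i - s, by omega, ?_⟩
  rw [mem_preimage, ← Function.iterate_add_apply] at hiK ⊢
  convert hiK using 2
  omega

end AlmostSpecification

section Orbits

variable {X : Type*} (f : X → X) (x : X)

theorem mem_fOrbit_self : x ∈ fOrbit f x := ⟨0, rfl⟩

theorem iterate_mem_fOrbit (n : ℕ) : f^[n] x ∈ fOrbit f x := ⟨n, rfl⟩

theorem mapsTo_fOrbit : MapsTo f (fOrbit f x) (fOrbit f x) := by
  rintro _ ⟨n, rfl⟩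
  exact ⟨n + 1, Function.iterate_succ_apply' f n x⟩

end Orbits

section MinimalPoints

variable {X : Type*} [MetricSpace X] {f : X → X}

theorem mapsTo_closure_fOrbit (hf : Continuous f) (x : X) :
    MapsTo f (closure (fOrbit f x)) (closure (fOrbit f x)) :=
  (mapsTo_fOrbit f x).closure hf

theorem closure_fOrbit_subset {Y : Set X} (hY : IsClosed Y) (hfY : MapsTo f Y Y) {x : X}
    (hx : x ∈ Y) : closure (fOrbit f x) ⊆ Y :=
  closure_minimal (by rintro _ ⟨n, rfl⟩; exact hfY.iterate n hx) hY

theorem MinimalPoint.iterate {x : X} (hx : MinimalPoint f x) (n : ℕ) :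
    MinimalPoint f (f^[n] x) := by
  have horbit : closure (fOrbit f (f^[n] x)) = closure (fOrbit f x) := by
    refine (closure_minimal ?_ isClosed_closure).antisymm
      (hx _ (subset_closure (iterate_mem_fOrbit f x n)))
    rintro _ ⟨k, rfl⟩
    exact subset_closure ⟨k + n, Function.iterate_add_apply f k n x⟩
  intro y hy
  rw [horbit] at hy ⊢
  exact hx y hy

def IsMinimalSet (f : X → X) (M : Set X) : Prop :=
  Minimal (fun A : Set X => A.Nonempty ∧ IsClosed A ∧ MapsTo f A A) M

theorem IsMinimalSet.minimalPoint (hf : Continuous f) {M : Set X} (hM : IsMinimalSet f M)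
    {x : X} (hx : x ∈ M) : MinimalPoint f x := by
  have closure_eq : ∀ y ∈ M, closure (fOrbit f y) = M := fun y hy =>
    hM.eq_of_subset ⟨⟨y, subset_closure (mem_fOrbit_self f y)⟩, isClosed_closure,
      mapsTo_closure_fOrbit hf y⟩ (closure_fOrbit_subset hM.prop.2.1 hM.prop.2.2 hy)
  intro y hy
  rw [closure_eq x hx] at hy ⊢
  rw [closure_eq y hy]

theorem exists_isMinimalSet_subset [CompactSpace X] {Y : Set X} (hYne : Y.Nonempty)
    (hY : IsClosed Y) (hfY : MapsTo f Y Y) : ∃ M ⊆ Y, IsMinimalSet f M := by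
  refine zorn_superset_nonempty _ (fun c hcS hchain hcne => ?_) Y ⟨hYne, hY, hfY⟩
  have : Nonempty c := hcne.coe_sort
  have hdir : DirectedOn (· ⊇ ·) c := fun A hA B hB =>
    (hchain.total hA hB).elim (fun h => ⟨A, hA, subset_rfl, h⟩) (fun h => ⟨B, hB, h, subset_rfl⟩)
  refine ⟨⋂₀ c, ⟨?_, isClosed_sInter fun A hA => (hcS hA).2.1, ?_⟩,
    fun A hA => sInter_subset_of_mem hA⟩
  · exact IsCompact.nonempty_sInter_of_directed_nonempty_isCompact_isClosed hdir
      (fun A hA => (hcS hA).1) (fun A hA => (hcS hA).2.1.isCompact) (fun A hA => (hcS hA).2.1)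
  · exact fun x hx => mem_sInter.2 fun A hA => (hcS hA).2.2 (hx A hA)

theorem exists_minimalPoint_mem [CompactSpace X] (hf : Continuous f) {Y : Set X}
    (hYne : Y.Nonempty) (hY : IsClosed Y) (hfY : MapsTo f Y Y) :
    ∃ x ∈ Y, MinimalPoint f x := by
  obtain ⟨M, hMY, hM⟩ := exists_isMinimalSet_subset hYne hY hfY
  obtain ⟨x, hx⟩ := hM.prop.1
  exact ⟨x, hMY hx, hM.minimalPoint hf hx⟩

end MinimalPoints

/-- A compact system with almost specification and a fully
supported invariant measure has a dense set of minimal points. -/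
theorem almostSpec_fullMeasure_dense_minimal
    {X : Type*} [MetricSpace X] [CompactSpace X] [MeasurableSpace X] [BorelSpace X]
    (f : X → X) (hf : Continuous f)
    (μ : Measure X) (hμ : InvariantProb f μ) (hfull : FullSupport μ)
    (h : AlmostSpec f) : Dense {x : X | MinimalPoint f x} := by
  obtain ⟨g, ε₀, kg, hg, hspec⟩ := h
  refine Metric.dense_iff.2 fun p r hr => ?_
  have hε : 0 < r / 3 := by positivity
  have hμB : 0 < μ (ball p (r / 3)) := hfull _ isOpen_ball (nonempty_ball.2 hε)
  have : IsProbabilityMeasure μ := hμ.1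
  obtain ⟨n, hgn, hn⟩ := ((hg.eventually_lt_mul hε hμB (measure_ne_top μ _)).and
    (eventually_ge_atTop (kg (r / 3)))).exists
  obtain ⟨x, hx⟩ := (hμ.measurePreserving hf.measurable).exists_le_card_iterate_mem
    measurableSet_ball n
  have hvisits := Nat.cast_lt.1 (hgn.trans_le hx)
  obtain ⟨z, hz⟩ := hspec.exists_forall_iterate_mul_mem hf hε hn
    ((finite_lt_nat n).isClosed_biUnion fun i _ => isClosed_closedBall.preimage (hf.iterate i))
    fun y hy => by
      obtain ⟨i, hi, hiy⟩ := exists_iterate_mem_ball_of_mem_mistakeBowenBall hvisits hy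
      exact mem_iUnion₂.2 ⟨i, hi, ball_subset_closedBall hiy⟩
  obtain ⟨y, hy, hy_min⟩ := exists_minimalPoint_mem hf
    ⟨z, subset_closure (mem_fOrbit_self f z)⟩ isClosed_closure (mapsTo_closure_fOrbit hf z)
  obtain ⟨t, -, ht⟩ :=
    mem_iUnion₂.1 (closure_fOrbit_subset_of_forall_iterate_mul_mem hf isClosed_closedBall hz hy)
  exact ⟨f^[t] y, closedBall_subset_ball (by linarith) ht, hy_min.iterate t⟩
end

section
/- Let (X,f) be a dynamical system with X a compact metric space and f : X → X continuous, and let A ⊆ X be a closed set with f(A) ⊆ A which contains the measure center of f. If the restriction f|_A : A → A has the average shadowing property on A, then f has the average shadowing property on X. -/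
open Filter Metric Set MeasureTheory Topology

/-!
Every invariant measure lives on the measure center, hence on `A`. By a Krylov–Bogolyubov
argument, the empirical measures of long `δ`-average-pseudo-orbit segments accumulate, as
`δ → 0`, on invariant measures; so the average of the continuous function `infDist · A`, which
vanishes on `A`, is uniformly small along every `δ`-average-pseudo-orbit with `δ` small.
Consequently the nearest-point projection of such a pseudo-orbit into `A` is an average
pseudo-orbit of `f|_A` (using a modulus `dist (f a) (f b) ≤ ε + C * dist a b` of uniform
continuity), and a point of `A` shadowing the projection in average also shadows the
original sequence.
-/

open BoundedContinuousFunction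
open scoped ENNReal

theorem UniformContinuous.exists_dist_le_add_mul_dist {α β : Type*} [PseudoMetricSpace α]
    [PseudoMetricSpace β] {g : α → β} (hg : UniformContinuous g)
    (hb : Bornology.IsBounded (range g)) {ε : ℝ} (hε : 0 < ε) :
    ∃ C, 0 ≤ C ∧ ∀ a b, dist (g a) (g b) ≤ ε + C * dist a b := by
  obtain ⟨η, hη, hclose⟩ := Metric.uniformContinuous_iff.1 hg ε hε
  refine ⟨diam (range g) / η, div_nonneg diam_nonneg hη.le, fun a b => ?_⟩
  rcases lt_or_ge (dist a b) η with hab | hab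
  · have : 0 ≤ diam (range g) / η * dist a b := by positivity
    linarith [hclose hab]
  · calc dist (g a) (g b) ≤ diam (range g) := dist_le_diam_of_mem hb ⟨a, rfl⟩ ⟨b, rfl⟩
      _ = diam (range g) / η * η := (div_mul_cancel₀ _ hη.ne').symm
      _ ≤ ε + diam (range g) / η * dist a b := by
        nlinarith [div_nonneg (diam_nonneg (s := range g)) hη.le]

section Averages

variable {X : Type*} [PseudoMetricSpace X]

theorem abs_avg_comp_sub_avg_le (f : X → X) {g : X → ℝ} {ε C B : ℝ}
    (hg : ∀ a b, dist (g a) (g b) ≤ ε + C * dist a b) (hB : ∀ a, |g a| ≤ B) (w : ℕ → X)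
    {n : ℕ} (hn : n ≠ 0) :
    |(∑ i ∈ Finset.range n, g (f (w i))) / n - (∑ i ∈ Finset.range n, g (w i)) / n|
      ≤ ε + C * ((∑ i ∈ Finset.range n, dist (f (w i)) (w (i + 1))) / n) + 2 * B / n := by
  have hn' : (0 : ℝ) < n := Nat.cast_pos.2 (Nat.pos_of_ne_zero hn)
  have htele : ∑ i ∈ Finset.range n, g (f (w i)) - ∑ i ∈ Finset.range n, g (w i)
      = ∑ i ∈ Finset.range n, (g (f (w i)) - g (w (i + 1))) + (g (w n) - g (w 0)) := by
    rw [Finset.sum_sub_distrib, ← Finset.sum_range_sub (fun i => g (w i)) n,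
      Finset.sum_sub_distrib]
    ring
  have hsteps : |∑ i ∈ Finset.range n, (g (f (w i)) - g (w (i + 1)))|
      ≤ n * ε + C * ∑ i ∈ Finset.range n, dist (f (w i)) (w (i + 1)) := by
    calc _ ≤ ∑ i ∈ Finset.range n, |g (f (w i)) - g (w (i + 1))| :=
          Finset.abs_sum_le_sum_abs _ _
      _ ≤ ∑ i ∈ Finset.range n, (ε + C * dist (f (w i)) (w (i + 1))) :=
        Finset.sum_le_sum fun i _ => hg _ _
      _ = _ := by simp [Finset.sum_add_distrib, Finset.mul_sum]
  have hbdry : |g (w n) - g (w 0)| ≤ 2 * B := by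
    linarith [abs_sub (g (w n)) (g (w 0)), hB (w n), hB (w 0)]
  rw [← sub_div, htele, abs_div, abs_of_pos hn', div_le_iff₀ hn']
  calc _ ≤ _ := abs_add_le _ _
    _ ≤ _ := add_le_add hsteps hbdry
    _ = _ := by field_simp

end Averages

section EmpiricalMeasure

variable {X : Type*} [MeasurableSpace X]

noncomputable def empiricalMeasure (w : ℕ → X) (n : ℕ) : Measure X :=
  (n : ℝ≥0∞)⁻¹ • ∑ i ∈ Finset.range n, Measure.dirac (w i)

theorem isProbabilityMeasure_empiricalMeasure (w : ℕ → X) {n : ℕ} (hn : n ≠ 0) :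
    IsProbabilityMeasure (empiricalMeasure w n) := by
  constructor
  simp [empiricalMeasure, ENNReal.inv_mul_cancel (Nat.cast_ne_zero.2 hn) (ENNReal.natCast_ne_top n)]

theorem integral_empiricalMeasure [MeasurableSingletonClass X] (w : ℕ → X) (n : ℕ)
    (g : X → ℝ) :
    ∫ x, g x ∂(empiricalMeasure w n) = (∑ i ∈ Finset.range n, g (w i)) / n := by
  rw [empiricalMeasure, integral_smul_measure,
    integral_finsetSum_measure fun i _ => integrable_dirac enorm_lt_top]
  simp [integral_dirac, div_eq_inv_mul]

end EmpiricalMeasure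

section KrylovBogolyubov

variable {X : Type*} [MetricSpace X]

theorem tendsto_avg_comp_sub_avg [CompactSpace X] (f : X → X) (g : X →ᵇ ℝ)
    {w : ℕ → ℕ → X} {n : ℕ → ℕ} (hn0 : ∀ j, n j ≠ 0) (hn : Tendsto n atTop atTop)
    (hjump : Tendsto (fun j => (∑ i ∈ Finset.range (n j), dist (f (w j i)) (w j (i + 1))) / n j)
      atTop (𝓝 0)) :
    Tendsto (fun j => (∑ i ∈ Finset.range (n j), g (f (w j i))) / n j
      - (∑ i ∈ Finset.range (n j), g (w j i)) / n j) atTop (𝓝 0) := by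
  refine Metric.tendsto_nhds.2 fun ε hε => ?_
  obtain ⟨C, -, hC⟩ := UniformContinuous.exists_dist_le_add_mul_dist
    (CompactSpace.uniformContinuous_of_continuous g.continuous) g.isBounded_range
    (by positivity : 0 < ε / 3)
  have hjumpC : ∀ᶠ j in atTop,
      C * ((∑ i ∈ Finset.range (n j), dist (f (w j i)) (w j (i + 1))) / n j) < ε / 3 := by
    refine (hjump.const_mul C).eventually (gt_mem_nhds ?_)
    simpa using (by positivity : 0 < ε / 3)
  have hbdry : ∀ᶠ j in atTop, 2 * ‖g‖ / n j < ε / 3 :=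
    (tendsto_const_nhds.div_atTop (tendsto_natCast_atTop_atTop.comp hn)).eventually
      (gt_mem_nhds (by positivity))
  filter_upwards [hjumpC, hbdry] with j hj hb
  rw [Real.dist_eq, sub_zero]
  have := abs_avg_comp_sub_avg_le f hC (fun a => (Real.norm_eq_abs _).symm.trans_le
    (g.norm_coe_le_norm a)) (w j) (hn0 j)
  linarith

variable [MeasurableSpace X] [BorelSpace X]

theorem invariantProb_of_forall_integral_comp_eq {f : X → X} (hf : Continuous f)
    {μ : Measure X} [IsProbabilityMeasure μ]
    (h : ∀ g : X →ᵇ ℝ, ∫ x, g (f x) ∂μ = ∫ x, g x ∂μ) : InvariantProb f μ := by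
  have hmap : μ.map f = μ := ext_of_forall_integral_eq_of_IsFiniteMeasure fun g => by
    rw [integral_map hf.aemeasurable g.continuous.aestronglyMeasurable]
    exact h g
  exact ⟨inferInstance, fun B hB => by rw [← Measure.map_apply hf.measurable hB, hmap]⟩

theorem exists_invariantProb_tendsto_avg [CompactSpace X] {f : X → X} (hf : Continuous f)
    {w : ℕ → ℕ → X} {n : ℕ → ℕ} (hn0 : ∀ j, n j ≠ 0) (hn : Tendsto n atTop atTop)
    (hjump : Tendsto (fun j => (∑ i ∈ Finset.range (n j), dist (f (w j i)) (w j (i + 1))) / n j)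
      atTop (𝓝 0)) :
    ∃ μ, InvariantProb f μ ∧ ∃ L : Ultrafilter ℕ, (L : Filter ℕ) ≤ atTop ∧
      ∀ g : X →ᵇ ℝ, Tendsto (fun j => (∑ i ∈ Finset.range (n j), g (w j i)) / n j)
        (L : Filter ℕ) (𝓝 (∫ x, g x ∂μ)) := by
  let ν : ℕ → ProbabilityMeasure X := fun j =>
    ⟨empiricalMeasure (w j) (n j), isProbabilityMeasure_empiricalMeasure _ (hn0 j)⟩
  let L := Ultrafilter.of (atTop : Filter ℕ)
  let μ : ProbabilityMeasure X := (L.map ν).lim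
  have havg : ∀ g : X →ᵇ ℝ,
      Tendsto (fun j => (∑ i ∈ Finset.range (n j), g (w j i)) / n j)
      (L : Filter ℕ) (𝓝 (∫ x, g x ∂(μ : Measure X))) := fun g => by
    simpa [ν, integral_empiricalMeasure] using
      ProbabilityMeasure.tendsto_iff_forall_integral_tendsto.1 (L.map ν).le_nhds_lim g
  refine ⟨μ, invariantProb_of_forall_integral_comp_eq hf fun g => ?_, L, Ultrafilter.of_le _,
    havg⟩
  have hdiff := (tendsto_avg_comp_sub_avg f g hn0 hn hjump).mono_left (Ultrafilter.of_le _)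
  refine tendsto_nhds_unique (havg (g.compContinuous ⟨f, hf⟩)) ?_
  simpa using (havg g).add hdiff

theorem exists_invariantProb [CompactSpace X] [Nonempty X] {f : X → X} (hf : Continuous f) :
    ∃ μ, InvariantProb f μ := by
  obtain ⟨x⟩ := ‹Nonempty X›
  obtain ⟨μ, hμ, -⟩ := exists_invariantProb_tendsto_avg hf (w := fun _ i => f^[i] x)
    (fun j => j.succ_ne_zero) (tendsto_add_atTop_nat 1)
    (by simp [← Function.iterate_succ_apply' f])
  exact ⟨μ, hμ⟩

end KrylovBogolyubov

section MeasureCenter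

variable {X : Type*} [MetricSpace X] [MeasurableSpace X] {f : X → X}

theorem support_subset_measureCenter {μ : Measure X} (hμ : InvariantProb f μ) :
    μ.support ⊆ measureCenter f := by
  intro x hx
  simp only [measureCenter, mem_compl_iff, mem_iUnion]
  rintro ⟨U, ⟨hU, hnull⟩, hxU⟩
  exact Measure.subset_compl_support_of_isOpen hU (hnull μ hμ) hxU hx

variable [HereditarilyLindelofSpace X]

theorem measure_compl_measureCenter {μ : Measure X} (hμ : InvariantProb f μ) :
    μ (measureCenter f)ᶜ = 0 :=
  measure_mono_null (compl_subset_compl.2 (support_subset_measureCenter hμ))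
    Measure.measure_compl_support

theorem integral_eq_zero_of_eqOn_measureCenter {μ : Measure X} (hμ : InvariantProb f μ)
    {g : X → ℝ} (hg : EqOn g 0 (measureCenter f)) : ∫ x, g x ∂μ = 0 :=
  integral_eq_zero_of_ae <| by
    filter_upwards [mem_ae_iff.2 (measure_compl_measureCenter hμ)] with x hx using hg hx

end MeasureCenter

section PseudoOrbitAverages

variable {X : Type*} [MetricSpace X] [CompactSpace X] [MeasurableSpace X] [BorelSpace X]
  {f : X → X}

theorem measureCenter_nonempty [Nonempty X] (hf : Continuous f) :
    (measureCenter f).Nonempty := by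
  obtain ⟨μ, hμ⟩ := exists_invariantProb hf
  have hnull := measure_compl_measureCenter hμ
  have := hμ.1
  by_contra hempty
  simp [not_nonempty_iff_eq_empty.1 hempty] at hnull

theorem exists_avg_lt_of_forall_integral_lt (hf : Continuous f) (g : X →ᵇ ℝ) {θ : ℝ}
    (h : ∀ μ, InvariantProb f μ → ∫ x, g x ∂μ < θ) :
    ∃ δ > 0, ∃ N, ∀ (w : ℕ → X) (n : ℕ), N ≤ n →
      (∑ i ∈ Finset.range n, dist (f (w i)) (w (i + 1))) / n < δ →
      (∑ i ∈ Finset.range n, g (w i)) / n < θ := by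
  by_contra! hbad
  choose w n hn hjump havg using fun j : ℕ => hbad (1 / (j + 1)) (by positivity) (j + 1)
  have hjump' : Tendsto
      (fun j => (∑ i ∈ Finset.range (n j), dist (f (w j i)) (w j (i + 1))) / n j)
      atTop (𝓝 0) :=
    squeeze_zero (fun j => by positivity) (fun j => (hjump j).le)
      tendsto_one_div_add_atTop_nhds_zero_nat
  obtain ⟨μ, hμ, L, -, hlim⟩ := exists_invariantProb_tendsto_avg hf
    (fun j => ((Nat.succ_pos j).trans_le (hn j)).ne')
    (tendsto_atTop_mono hn (tendsto_add_atTop_nat 1)) hjump'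
  exact (h μ hμ).not_ge (ge_of_tendsto (hlim g) (Eventually.of_forall havg))

theorem exists_avgPseudoOrbit_avg_lt (hf : Continuous f) (g : X →ᵇ ℝ) {θ : ℝ}
    (h : ∀ μ, InvariantProb f μ → ∫ x, g x ∂μ < θ) :
    ∃ δ > 0, ∀ x, AvgPseudoOrbit f δ x →
      ∃ N, ∀ n ≥ N, ∀ k, (∑ i ∈ Finset.range n, g (x (i + k))) / n < θ := by
  obtain ⟨δ, hδ, N, hN⟩ := exists_avg_lt_of_forall_integral_lt hf g h
  refine ⟨δ, hδ, fun x hx => ?_⟩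
  obtain ⟨N', -, hx⟩ := hx
  refine ⟨max N N', fun n hn k => hN (fun i => x (i + k)) n (le_of_max_le_left hn) ?_⟩
  simpa only [Nat.add_right_comm _ 1] using hx n (le_of_max_le_right hn) k

theorem exists_avgPseudoOrbit_avg_infDist_lt (hf : Continuous f) {A : Set X}
    (hA : measureCenter f ⊆ A) {θ : ℝ} (hθ : 0 < θ) :
    ∃ δ > 0, ∀ x, AvgPseudoOrbit f δ x →
      ∃ N, ∀ n ≥ N, ∀ k, (∑ i ∈ Finset.range n, infDist (x (i + k)) A) / n < θ :=
  exists_avgPseudoOrbit_avg_lt hf (mkOfCompact ⟨(infDist · A), continuous_infDist_pt A⟩)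
    fun μ hμ => by
      change ∫ x, infDist x A ∂μ < θ
      rwa [integral_eq_zero_of_eqOn_measureCenter hμ fun x hx => infDist_zero_of_mem (hA hx)]

end PseudoOrbitAverages

section Shadowing

variable {X : Type*} [MetricSpace X] {f : X → X}

theorem AvgPseudoOrbit.mono {δ δ' : ℝ} {x : ℕ → X} (hx : AvgPseudoOrbit f δ x)
    (h : δ ≤ δ') : AvgPseudoOrbit f δ' x := by
  obtain ⟨N, hN0, hN⟩ := hx
  exact ⟨N, hN0, fun n hn k => (hN n hn k).trans_le h⟩

theorem ShadowedInAvg.mono {ε ε' : ℝ} {x : ℕ → X} {z : X} (hz : ShadowedInAvg f ε x z)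
    (h : ε ≤ ε') : ShadowedInAvg f ε' x z :=
  lt_of_lt_of_le hz h

theorem avgPseudoOrbit_restrict_iff {A : Set X} (hfA : MapsTo f A A) {δ : ℝ} {y : ℕ → A} :
    AvgPseudoOrbit (hfA.restrict f A A) δ y ↔ AvgPseudoOrbit f δ (fun i => (y i : X)) :=
  Iff.rfl

theorem shadowedInAvg_restrict_iff {A : Set X} (hfA : MapsTo f A A) {ε : ℝ} {y : ℕ → A}
    {z : A} :
    ShadowedInAvg (hfA.restrict f A A) ε y z ↔ ShadowedInAvg f ε (fun i => (y i : X)) z := by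
  simp only [ShadowedInAvg, Subtype.dist_eq, MapsTo.coe_iterate_restrict]

theorem sum_dist_apply_succ_le {ε C : ℝ} (hf : ∀ a b, dist (f a) (f b) ≤ ε + C * dist a b)
    (x y : ℕ → X) (n : ℕ) :
    ∑ i ∈ Finset.range n, dist (f (y i)) (y (i + 1))
      ≤ n * ε + C * ∑ i ∈ Finset.range n, dist (x i) (y i)
        + ∑ i ∈ Finset.range n, dist (f (x i)) (x (i + 1))
        + ∑ i ∈ Finset.range n, dist (x (i + 1)) (y (i + 1)) := by
  calc _ ≤ ∑ i ∈ Finset.range n, ((ε + C * dist (x i) (y i)) + dist (f (x i)) (x (i + 1))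
        + dist (x (i + 1)) (y (i + 1))) := by
        refine Finset.sum_le_sum fun i _ => ?_
        have := hf (y i) (x i)
        rw [dist_comm (y i)] at this
        linarith [dist_triangle4 (f (y i)) (f (x i)) (x (i + 1)) (y (i + 1))]
    _ = _ := by simp [Finset.sum_add_distrib, Finset.mul_sum]

theorem AvgPseudoOrbit.of_avg_dist_lt {ε C δ θ : ℝ} (hC : 0 ≤ C)
    (hf : ∀ a b, dist (f a) (f b) ≤ ε + C * dist a b) {x y : ℕ → X}
    (hx : AvgPseudoOrbit f δ x)
    (hxy : ∃ N, ∀ n ≥ N, ∀ k,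
      (∑ i ∈ Finset.range n, dist (x (i + k)) (y (i + k))) / n < θ) :
    AvgPseudoOrbit f (ε + C * θ + δ + θ) y := by
  obtain ⟨N, hN0, hN⟩ := hx
  obtain ⟨N', hN'⟩ := hxy
  refine ⟨max N N', lt_max_of_lt_left hN0, fun n hn k => ?_⟩
  have hn0 : (0 : ℝ) < n := Nat.cast_pos.2 (hN0.trans_le (le_of_max_le_left hn))
  have hdist := hN' n (le_of_max_le_right hn) k
  have hjump := hN n (le_of_max_le_left hn) k
  have hdist' := hN' n (le_of_max_le_right hn) (k + 1)
  have hsum := sum_dist_apply_succ_le hf (fun i => x (i + k)) (fun i => y (i + k)) n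
  simp only [Nat.add_right_comm _ 1 k] at hsum
  simp only [← Nat.add_assoc] at hdist'
  rw [div_lt_iff₀ hn0] at hdist hjump hdist' ⊢
  have hCdist := mul_le_mul_of_nonneg_left hdist.le hC
  linarith

theorem isBoundedUnder_le_avg_dist [CompactSpace X] (u v : ℕ → X) :
    IsBoundedUnder (· ≤ ·) atTop fun n => (∑ i ∈ Finset.range n, dist (u i) (v i)) / n := by
  refine isBoundedUnder_of ⟨diam (univ : Set X), fun n => div_le_of_le_mul₀ n.cast_nonneg
    diam_nonneg ?_⟩
  calc _ ≤ (Finset.range n).card • diam (univ : Set X) := Finset.sum_le_card_nsmul _ _ _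
        fun i _ => dist_le_diam_of_mem isBounded_of_compactSpace (mem_univ _) (mem_univ _)
    _ = _ := by rw [Finset.card_range, nsmul_eq_mul, mul_comm]

theorem ShadowedInAvg.of_eventually_avg_dist_le [CompactSpace X] {ε θ : ℝ} {x y : ℕ → X}
    {z : X} (hz : ShadowedInAvg f ε y z)
    (hxy : ∀ᶠ n in atTop, (∑ i ∈ Finset.range n, dist (x i) (y i)) / n ≤ θ) :
    ShadowedInAvg f (ε + θ) x z := by
  obtain ⟨c, hzc, hcε⟩ := exists_between hz
  have hev : ∀ᶠ n in atTop,
      (∑ i ∈ Finset.range n, dist (f^[i] z) (x i)) / n ≤ c + θ := by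
    filter_upwards [eventually_lt_of_limsup_lt hzc (isBoundedUnder_le_avg_dist _ _), hxy]
      with n hzn hn
    have : (∑ i ∈ Finset.range n, dist (f^[i] z) (x i)) / n
        ≤ (∑ i ∈ Finset.range n, dist (f^[i] z) (y i)) / n
          + (∑ i ∈ Finset.range n, dist (x i) (y i)) / n := by
      rw [← add_div, ← Finset.sum_add_distrib]
      gcongr with i
      exact dist_triangle_right _ _ _
    linarith
  exact (limsup_le_of_le (isCoboundedUnder_le_of_le atTop fun n => by positivity) hev).trans_lt
    (by linarith)

end Shadowing

section Projection

variable {X : Type*} [MetricSpace X] [CompactSpace X] [MeasurableSpace X] [BorelSpace X]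
  {f : X → X}

theorem exists_close_avgPseudoOrbit_of_measureCenter_subset (hf : Continuous f) {A : Set X}
    (hA : IsClosed A) (hmc : measureCenter f ⊆ A) {δ' θ : ℝ} (hδ' : 0 < δ') (hθ : 0 < θ) :
    ∃ δ > 0, ∀ x, AvgPseudoOrbit f δ x → ∃ y : ℕ → X, (∀ i, y i ∈ A) ∧
      AvgPseudoOrbit f δ' y ∧
      ∀ᶠ n in atTop, (∑ i ∈ Finset.range n, dist (x i) (y i)) / n ≤ θ := by
  obtain ⟨C, hC0, hC⟩ := UniformContinuous.exists_dist_le_add_mul_dist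
    (CompactSpace.uniformContinuous_of_continuous hf) (isCompact_range hf).isBounded
    (by positivity : 0 < δ' / 4)
  set θ' := min (δ' / 4) θ / (C + 1)
  have hCθ' : (C + 1) * θ' ≤ δ' / 4 := by
    rw [mul_div_cancel₀ _ (by positivity)]
    exact min_le_left _ _
  have hθ'θ : θ' ≤ θ := (div_le_self (by positivity) (by linarith)).trans (min_le_right _ _)
  obtain ⟨δ, hδ, hnear⟩ :=
    exists_avgPseudoOrbit_avg_infDist_lt hf hmc (by positivity : 0 < θ')
  refine ⟨min δ (δ' / 4), by positivity, fun x hx => ?_⟩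
  have : Nonempty X := ⟨x 0⟩
  obtain ⟨N, hN⟩ := hnear x (hx.mono (min_le_left _ _))
  choose p hpA hp using hA.isCompact.exists_infDist_eq_dist ((measureCenter_nonempty hf).mono hmc)
  have hxp : ∀ n ≥ N, ∀ k,
      (∑ i ∈ Finset.range n, dist (x (i + k)) (p (x (i + k)))) / n < θ' := by
    simpa only [hp] using hN
  refine ⟨fun i => p (x i), fun i => hpA (x i),
    ((hx.mono (min_le_right _ _)).of_avg_dist_lt hC0 hC ⟨N, hxp⟩).mono (by linarith), ?_⟩
  filter_upwards [eventually_ge_atTop N] with n hn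
  simpa using (hxp n hn 0).le.trans hθ'θ

end Projection

/-- If a closed invariant set `A` contains the measure center and
`f|_A` has the average shadowing property, then so does `f`. -/
theorem avgShadowing_of_restriction_to_measureCenter
    {X : Type*} [MetricSpace X] [CompactSpace X] [MeasurableSpace X] [BorelSpace X]
    (f : X → X) (hf : Continuous f)
    (A : Set X) (hA : IsClosed A) (hfA : Set.MapsTo f A A)
    (hmc : measureCenter f ⊆ A)
    (h : AvgShadowing (Set.MapsTo.restrict f A A hfA)) : AvgShadowing f := by
  intro ε hε
  obtain ⟨δA, hδA, hshadow⟩ := h (ε / 2) (half_pos hε)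
  obtain ⟨δ, hδ, hclose⟩ :=
    exists_close_avgPseudoOrbit_of_measureCenter_subset hf hA hmc hδA (by positivity : 0 < ε / 4)
  refine ⟨δ, hδ, fun x hx => ?_⟩
  obtain ⟨y, hyA, hy, hxy⟩ := hclose x hx
  obtain ⟨z, hz⟩ := hshadow (fun i => ⟨y i, hyA i⟩) ((avgPseudoOrbit_restrict_iff hfA).2 hy)
  exact ⟨z, (((shadowedInAvg_restrict_iff hfA).1 hz).of_eventually_avg_dist_le hxy).mono
    (by linarith)⟩
end

section
/- Let (X,f) be a dynamical system with X a compact metric space and f : X → X continuous. If f is chain transitive and has the limit shadowing property, then f has the shadowing property. -/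
open Filter Metric Set MeasureTheory Topology

/-!
Suppose shadowing fails at scale `ε`. By compactness, for every `k` there is a
`1/(k+1)`-pseudo-orbit whose initial segment of some finite length `n_k` is not `ε`-shadowed by
any point. Chain transitivity joins the end of the `k`-th segment to the start of the next one by
a `1/(k+1)`-chain; the concatenation of all these blocks is an asymptotic pseudo-orbit. A point
asymptotically shadowing it would, from the start of a late enough block on, `ε`-shadow that
block's bad segment.
-/

section Concatenation

variable {X : Type*}

def blockStart (L : ℕ → ℕ) (k : ℕ) : ℕ := ∑ j ∈ Finset.range k, L j

def blockIndex (L : ℕ → ℕ) (i : ℕ) : ℕ := Nat.findGreatest (fun k => blockStart L k ≤ i) i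

/-- The sequence `c 0 0, …, c 0 (L 0 - 1), c 1 0, …, c 1 (L 1 - 1), …`; meaningful only when
all `L k` are positive. -/
def concatBlocks (L : ℕ → ℕ) (c : ℕ → ℕ → X) (i : ℕ) : X :=
  c (blockIndex L i) (i - blockStart L (blockIndex L i))

theorem blockStart_zero (L : ℕ → ℕ) : blockStart L 0 = 0 := Finset.sum_range_zero L

theorem blockStart_succ (L : ℕ → ℕ) (k : ℕ) : blockStart L (k + 1) = blockStart L k + L k :=
  Finset.sum_range_succ L k

theorem blockStart_blockIndex_le (L : ℕ → ℕ) (i : ℕ) : blockStart L (blockIndex L i) ≤ i :=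
  Nat.findGreatest_spec (P := fun k => blockStart L k ≤ i) (Nat.zero_le i)
    (by rw [blockStart_zero]; exact Nat.zero_le i)

variable {L : ℕ → ℕ}

theorem blockStart_strictMono (hL : ∀ k, 0 < L k) : StrictMono (blockStart L) :=
  strictMono_nat_of_lt_succ fun k => by rw [blockStart_succ]; exact Nat.lt_add_of_pos_right (hL k)

theorem le_blockStart (hL : ∀ k, 0 < L k) (k : ℕ) : k ≤ blockStart L k :=
  (blockStart_strictMono hL).le_apply

theorem le_blockIndex (hL : ∀ k, 0 < L k) {k i : ℕ} (h : blockStart L k ≤ i) :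
    k ≤ blockIndex L i :=
  Nat.le_findGreatest ((le_blockStart hL k).trans h) h

theorem lt_blockStart_blockIndex_succ (hL : ∀ k, 0 < L k) (i : ℕ) :
    i < blockStart L (blockIndex L i + 1) := by
  by_contra! h
  exact Nat.findGreatest_is_greatest (Nat.lt_succ_self _) ((le_blockStart hL _).trans h) h

theorem blockIndex_eq (hL : ∀ k, 0 < L k) {k i : ℕ} (h₁ : blockStart L k ≤ i)
    (h₂ : i < blockStart L (k + 1)) : blockIndex L i = k := by
  refine le_antisymm ?_ (le_blockIndex hL h₁)
  by_contra! hk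
  have := (blockStart_strictMono hL).monotone (show k + 1 ≤ blockIndex L i by omega)
  have := blockStart_blockIndex_le L i
  omega

theorem tendsto_blockIndex_atTop (hL : ∀ k, 0 < L k) : Tendsto (blockIndex L) atTop atTop :=
  tendsto_atTop.2 fun k => eventually_atTop.2 ⟨blockStart L k, fun _ => le_blockIndex hL⟩

theorem concatBlocks_blockStart_add (hL : ∀ k, 0 < L k) (c : ℕ → ℕ → X) {k j : ℕ}
    (hj : j < L k) : concatBlocks L c (blockStart L k + j) = c k j := by
  have hk : blockIndex L (blockStart L k + j) = k :=
    blockIndex_eq hL (Nat.le_add_right _ _) (by rw [blockStart_succ]; omega)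
  simp only [concatBlocks, hk, Nat.add_sub_cancel_left]

theorem concatBlocks_blockStart_add_of_le (hL : ∀ k, 0 < L k) {c : ℕ → ℕ → X}
    (hjoin : ∀ k, c k (L k) = c (k + 1) 0) {k j : ℕ} (hj : j ≤ L k) :
    concatBlocks L c (blockStart L k + j) = c k j := by
  rcases hj.lt_or_eq with hj | rfl
  · exact concatBlocks_blockStart_add hL c hj
  · rw [hjoin, ← blockStart_succ, ← concatBlocks_blockStart_add hL c (hL (k + 1)), add_zero]

variable [PseudoMetricSpace X] {f : X → X} {c : ℕ → ℕ → X} {δ : ℕ → ℝ}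

theorem dist_concatBlocks_succ_lt (hL : ∀ k, 0 < L k) (hjoin : ∀ k, c k (L k) = c (k + 1) 0)
    (hstep : ∀ k, ∀ j < L k, dist (f (c k j)) (c k (j + 1)) < δ k) (i : ℕ) :
    dist (f (concatBlocks L c i)) (concatBlocks L c (i + 1)) < δ (blockIndex L i) := by
  obtain ⟨j, hi⟩ := Nat.exists_eq_add_of_le (blockStart_blockIndex_le L i)
  have hj : j < L (blockIndex L i) := by
    have := lt_blockStart_blockIndex_succ hL i
    rw [blockStart_succ] at this
    omega
  have h := hstep _ j hj
  rwa [← concatBlocks_blockStart_add_of_le hL hjoin (j := j + 1) hj,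
    ← concatBlocks_blockStart_add hL c hj, ← add_assoc, ← hi] at h

theorem tendsto_dist_concatBlocks (hL : ∀ k, 0 < L k) (hjoin : ∀ k, c k (L k) = c (k + 1) 0)
    (hstep : ∀ k, ∀ j < L k, dist (f (c k j)) (c k (j + 1)) < δ k)
    (hδ : Tendsto δ atTop (𝓝 0)) :
    Tendsto (fun i => dist (f (concatBlocks L c i)) (concatBlocks L c (i + 1))) atTop (𝓝 0) :=
  squeeze_zero (fun _ => dist_nonneg)
    (fun i => (dist_concatBlocks_succ_lt hL hjoin hstep i).le)
    (hδ.comp (tendsto_blockIndex_atTop hL))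

end Concatenation

theorem exists_forall_dist_iterate_le {X : Type*} [PseudoMetricSpace X] [CompactSpace X]
    {f : X → X} (hf : Continuous f) (x : ℕ → X) {η : ℝ}
    (h : ∀ n, ∃ z, ∀ i ≤ n, dist (f^[i] z) (x i) ≤ η) :
    ∃ z, ∀ i, dist (f^[i] z) (x i) ≤ η := by
  let K : ℕ → Set X := fun n => ⋂ i ≤ n, {z | dist (f^[i] z) (x i) ≤ η}
  have hclosed : ∀ n, IsClosed (K n) := fun n =>
    isClosed_biInter fun i _ =>
      isClosed_le ((hf.iterate i).dist continuous_const) continuous_const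
  have hanti : ∀ n, K (n + 1) ⊆ K n := fun n =>
    biInter_subset_biInter_left fun i (hi : i ≤ n) => hi.trans n.le_succ
  have hne : ∀ n, (K n).Nonempty := fun n => by
    obtain ⟨z, hz⟩ := h n
    exact ⟨z, mem_iInter₂.2 hz⟩
  obtain ⟨z, hz⟩ := IsCompact.nonempty_iInter_of_sequence_nonempty_isCompact_isClosed K hanti
    hne (hclosed 0).isCompact hclosed
  exact ⟨z, fun i => mem_iInter₂.1 (mem_iInter.1 hz i) i le_rfl⟩

theorem exists_pseudoOrbit_not_shadowed_up_to_of_not_shadowing {X : Type*} [MetricSpace X]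
    [CompactSpace X] {f : X → X} (hf : Continuous f) (hs : ¬Shadowing f) :
    ∃ ε > 0, ∀ δ > 0, ∃ x : ℕ → X, PseudoOrbit f δ x ∧
      ∃ n, ∀ z, ∃ i ≤ n, ε < dist (f^[i] z) (x i) := by
  simp only [Shadowing, not_forall, not_exists, not_and, not_lt] at hs
  obtain ⟨ε, hε, hs⟩ := hs
  -- halving `ε` leaves room for the closed condition `≤ ε / 2`, to which compactness applies
  refine ⟨ε / 2, half_pos hε, fun δ hδ => ?_⟩
  obtain ⟨x, hx, hfar⟩ := hs δ hδ
  refine ⟨x, hx, ?_⟩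
  by_contra! hclose
  obtain ⟨z, hz⟩ := exists_forall_dist_iterate_le hf x hclose
  obtain ⟨i, hi⟩ := hfar z
  linarith [hz i]

theorem exists_chain_extension_of_finChain {X : Type*} [MetricSpace X] {f : X → X} {δ : ℝ}
    {x : ℕ → X} {n m : ℕ} {w : X} (hx : ∀ i < n, dist (f (x i)) (x (i + 1)) < δ)
    (hchain : FinChain f δ m (x n) w) :
    ∃ c : ℕ → X, (∀ i ≤ n, c i = x i) ∧ c (n + m) = w ∧
      ∀ i < n + m, dist (f (c i)) (c (i + 1)) < δ := by
  obtain ⟨d, hd0, hdm, hd⟩ := hchain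
  let c : ℕ → X := fun i => if i < n then x i else d (i - n)
  have hcx : ∀ i ≤ n, c i = x i := fun i hi => by
    rcases hi.lt_or_eq with hi | rfl
    · exact if_pos hi
    · simp [c, hd0]
  refine ⟨c, hcx, by simp [c, hdm], fun i hi => ?_⟩
  by_cases hin : i < n
  · rw [hcx i hin.le, hcx (i + 1) hin]
    exact hx i hin
  · simp only [c, if_neg hin, if_neg (show ¬i + 1 < n by omega),
      show i + 1 - n = i - n + 1 by omega]
    exact hd _ (by omega)

/-- A chain transitive compact system with limit shadowing has
shadowing. -/
theorem shadowing_of_chainTransitive_limitShadowing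
    {X : Type*} [MetricSpace X] [CompactSpace X]
    (f : X → X) (hf : Continuous f)
    (hct : ChainTransitive f) (hls : LimitShadowing f) : Shadowing f := by
  by_contra hs
  obtain ⟨ε, hε, hbad⟩ := exists_pseudoOrbit_not_shadowed_up_to_of_not_shadowing hf hs
  have hδ : ∀ k : ℕ, (0 : ℝ) < 1 / ((k : ℝ) + 1) := fun _ => Nat.one_div_pos_of_nat
  choose x hx n hn using fun k => hbad _ (hδ k)
  choose m hm hchain using fun k => hct _ (hδ k) (x k (n k)) (x (k + 1) 0)
  choose c hcx hcend hcstep using fun k =>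
    exists_chain_extension_of_finChain (fun i _ => hx k i) (hchain k)
  have hL : ∀ k, 0 < n k + m k := fun k => Nat.add_pos_right _ (hm k)
  have hjoin : ∀ k, c k (n k + m k) = c (k + 1) 0 := fun k => by
    rw [hcend, hcx _ 0 (Nat.zero_le _)]
  obtain ⟨z, hz⟩ := hls _ (tendsto_dist_concatBlocks hL hjoin hcstep
    tendsto_one_div_add_atTop_nhds_zero_nat)
  obtain ⟨N, hN⟩ := eventually_atTop.1 (hz.eventually (gt_mem_nhds hε))
  obtain ⟨i, hi, hfar⟩ := hn N (f^[blockStart _ N] z)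
  have hclose := hN (blockStart _ N + i) ((le_blockStart hL N).trans (Nat.le_add_right _ _))
  rw [concatBlocks_blockStart_add hL c (by have := hm N; omega), hcx N i hi, add_comm,
    Function.iterate_add_apply] at hclose
  exact hfar.not_gt hclose
end
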